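/- arXiv:2401.05574 — 10 statements merged into one kernel-verified Lean document; each statement's English description precedes it below -/
import Mathlib

section
/- Let n ≥ 1, d ≥ 1, β ∈ (0,1), τ ∈ (0,1), and D ≥ 0. Let w₁, …, w_n be independent ℝ^d-valued random vectors with P[‖w_i‖ > D] ≤ exp(−(1 + 1/β)/τ) for each i. Then with probability at least 1 − e^{−0.3n}, the following holds: for every subset S ⊆ {1,…,n} with |S| ≥ nβ, the set {i ∈ S : ‖w_i‖ ≤ D} has cardinality at least (1 − τ)|S|. -/
/-!
If some `S` with `|S| ≥ nβ` has more than `τ|S|` indices with `‖w_i‖ > D`, then more than `τβn`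
indices are bad overall, so some set of `k = ⌊τβn⌋ + 1` indices is entirely bad. By independence
and a union bound this has probability at most `C(n, k) p^k ≤ 2^n p^k` with
`p = exp(-(1 + 1/β)/τ)`, and `k (1 + 1/β)/τ > (1 + β) n` makes this at most `e^{-0.3n}`.
-/

open MeasureTheory ProbabilityTheory Finset

open scoped ENNReal

lemma one_sub_le_toReal_measure_of_measure_compl_le {Ω : Type*} [MeasurableSpace Ω]
    {μ : Measure Ω} [IsProbabilityMeasure μ] {s : Set Ω} {ε : ℝ} (hε : 0 ≤ ε)
    (h : μ sᶜ ≤ ENNReal.ofReal ε) : 1 - ε ≤ (μ s).toReal := by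
  have hcover : (1 : ℝ≥0∞) ≤ μ s + μ sᶜ := by
    simpa [Set.union_compl_self] using measure_union_le (μ := μ) s sᶜ
  have hcover' : (1 : ℝ) ≤ (μ s).toReal + (μ sᶜ).toReal := by
    simpa [ENNReal.toReal_add] using ENNReal.toReal_mono (by finiteness) hcover
  linarith [ENNReal.toReal_le_of_le_ofReal hε h]

open Classical in
lemma measure_le_card_filter_mem_le {ι Ω : Type*} {κ : ι → Type*} [Fintype ι]
    [MeasurableSpace Ω] {μ : Measure Ω} [∀ i, MeasurableSpace (κ i)] {f : ∀ i, Ω → κ i}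
    (hf : iIndepFun f μ) {s : ∀ i, Set (κ i)} (hs : ∀ i, MeasurableSet (s i)) {p : ℝ≥0∞}
    (hp : ∀ i, μ (f i ⁻¹' s i) ≤ p) (k : ℕ) :
    μ {ω | k ≤ #{i | f i ω ∈ s i}} ≤ (Fintype.card ι).choose k * p ^ k := by
  have hcover : {ω | k ≤ #{i | f i ω ∈ s i}} ⊆
      ⋃ T ∈ powersetCard k (univ : Finset ι), ⋂ i ∈ T, f i ⁻¹' s i := by
    intro ω hω
    obtain ⟨T, hT, hTcard⟩ := exists_subset_card_eq hω
    simp only [Set.mem_iUnion, Set.mem_iInter, mem_powersetCard]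
    exact ⟨T, ⟨subset_univ T, hTcard⟩, fun i hi => (mem_filter.1 (hT hi)).2⟩
  have hinter : ∀ T ∈ powersetCard k (univ : Finset ι), μ (⋂ i ∈ T, f i ⁻¹' s i) ≤ p ^ k := by
    intro T hT
    rw [hf.meas_biInter fun i _ => ⟨s i, hs i, rfl⟩, ← (mem_powersetCard.1 hT).2]
    exact prod_le_pow_card _ _ _ fun i _ => hp i
  calc μ {ω | k ≤ #{i | f i ω ∈ s i}}
      ≤ ∑ T ∈ powersetCard k (univ : Finset ι), μ (⋂ i ∈ T, f i ⁻¹' s i) :=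
        (measure_mono hcover).trans (measure_biUnion_finset_le _ _)
    _ ≤ ∑ _T ∈ powersetCard k (univ : Finset ι), p ^ k := sum_le_sum hinter
    _ = (Fintype.card ι).choose k * p ^ k := by
        rw [sum_const, card_powersetCard, card_univ, nsmul_eq_mul]

lemma le_card_filter_of_card_filter_not_le {ι : Type*} [Fintype ι] {p : ι → Prop}
    [DecidablePred p] {τ m : ℝ} (hτ : 0 ≤ τ) (hbad : (#{i | ¬ p i} : ℝ) ≤ τ * m)
    {S : Finset ι} (hS : m ≤ #S) : (1 - τ) * #S ≤ #(S.filter p) := by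
  have hsplit := card_filter_add_card_filter_not (s := S) p
  have hsub : #(S.filter (¬ p ·)) ≤ #{i | ¬ p i} :=
    card_le_card (filter_subset_filter _ (subset_univ S))
  have hbadS : (#(S.filter (¬ p ·)) : ℝ) ≤ τ * #S :=
    (Nat.cast_le.2 hsub).trans (hbad.trans (mul_le_mul_of_nonneg_left hS hτ))
  rw [← hsplit] at hbadS ⊢
  push_cast at hbadS ⊢
  linarith

lemma choose_mul_exp_pow_le_exp {n k : ℕ} {β τ : ℝ} (hβ : 0 < β) (hτ : 0 < τ)
    (hk : τ * (n * β) < k) :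
    (n.choose k : ℝ) * Real.exp (-(1 + 1 / β) / τ) ^ k ≤ Real.exp (-(0.3 : ℝ) * n) := by
  have hchoose : (n.choose k : ℝ) ≤ Real.exp (n * Real.log 2) := by
    rw [Real.exp_nat_mul, Real.exp_log two_pos]
    exact_mod_cast Nat.choose_le_two_pow n k
  -- `k / τ > β n`, so the exponent is below `n (log 2 - 1 - β) ≤ -0.3 n`.
  have hexponent : (1 + β) * n ≤ k * ((1 + 1 / β) / τ) := by
    have : (1 + β) * n = τ * (n * β) * ((1 + 1 / β) / τ) := by field_simp; ring
    rw [this]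
    exact mul_le_mul_of_nonneg_right hk.le (by positivity)
  have hlog : Real.log 2 < 0.7 := Real.log_two_lt_d9.trans (by norm_num)
  calc (n.choose k : ℝ) * Real.exp (-(1 + 1 / β) / τ) ^ k
      ≤ Real.exp (n * Real.log 2) * Real.exp (-(k * ((1 + 1 / β) / τ))) := by
        rw [← Real.exp_nat_mul, neg_div, mul_neg]
        gcongr
    _ ≤ Real.exp (-(0.3 : ℝ) * n) := by
        rw [← Real.exp_add]
        gcongr
        nlinarith [Nat.cast_nonneg (α := ℝ) n, mul_nonneg hβ.le (Nat.cast_nonneg (α := ℝ) n)]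

theorem uniform_norm_concentration_general
    (n d : ℕ)
    (β τ D : ℝ) (hβ : β ∈ Set.Ioo (0 : ℝ) 1) (hτ : τ ∈ Set.Ioo (0 : ℝ) 1)
    (Ω : Type*) [MeasureSpace Ω] [IsProbabilityMeasure (ℙ : Measure Ω)]
    (w : Fin n → Ω → EuclideanSpace ℝ (Fin d))
    (hindep : iIndepFun w ℙ)
    (htail : ∀ i, (ℙ {ω | D < ‖w i ω‖}).toReal ≤ Real.exp (-(1 + 1 / β) / τ)) :
    1 - Real.exp (-(0.3 : ℝ) * n)
      ≤ (ℙ {ω | ∀ S : Finset (Fin n), (n : ℝ) * β ≤ S.card →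
            (1 - τ) * S.card ≤ ((S.filter (fun i => ‖w i ω‖ ≤ D)).card : ℝ)}).toReal := by
  set k := ⌊τ * (n * β)⌋₊ + 1
  have hk : τ * (n * β) < k := by simpa [k] using Nat.lt_floor_add_one (τ * (n * β))
  have hbad : ∀ ω, ¬ k ≤ #{i | w i ω ∈ {x | D < ‖x‖}} →
      (#{i | ¬ ‖w i ω‖ ≤ D} : ℝ) ≤ τ * (n * β) := by
    intro ω hω
    simp only [Set.mem_ofPred_eq, not_le] at hω ⊢
    exact (Nat.le_floor_iff (by have := hβ.1; have := hτ.1; positivity)).1 (by omega)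
  have htail' : ∀ i, ℙ (w i ⁻¹' {x | D < ‖x‖}) ≤ ENNReal.ofReal (Real.exp (-(1 + 1 / β) / τ)) :=
    fun i => (ENNReal.le_ofReal_iff_toReal_le (by finiteness) (by positivity)).2 (htail i)
  refine one_sub_le_toReal_measure_of_measure_compl_le (by positivity) ?_
  calc _ ≤ ℙ {ω | k ≤ #{i | w i ω ∈ {x | D < ‖x‖}}} := by
        refine measure_mono fun ω hω => by_contra fun hk' => hω fun S hS => ?_
        exact le_card_filter_of_card_filter_not_le hτ.1.le (hbad ω hk') hS
    _ ≤ (Fintype.card (Fin n)).choose k * ENNReal.ofReal (Real.exp (-(1 + 1 / β) / τ)) ^ k :=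
        measure_le_card_filter_mem_le hindep
          (fun _ => measurableSet_lt measurable_const measurable_norm) htail' k
    _ ≤ ENNReal.ofReal (Real.exp (-(0.3 : ℝ) * n)) := by
        rw [Fintype.card_fin, ← ENNReal.ofReal_pow (by positivity), ← ENNReal.ofReal_natCast,
          ← ENNReal.ofReal_mul (by positivity)]
        exact ENNReal.ofReal_le_ofReal (choose_mul_exp_pow_le_exp hβ.1 hτ.1 hk)

/-- Uniform norm-concentration lemma (Lemma `E-norm-genr` of the paper):
with probability at least `1 − e^{−0.3n}`, for every subset `S ⊆ {1,…,n}`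
with `|S| ≥ nβ`, at least `(1 − τ)|S|` of the indices `i ∈ S` satisfy
`‖w_i‖ ≤ D`. -/
theorem uniform_norm_concentration
    (n d : ℕ) (hn : 1 ≤ n) (hd : 1 ≤ d)
    (β τ D : ℝ) (hβ : β ∈ Set.Ioo (0 : ℝ) 1) (hτ : τ ∈ Set.Ioo (0 : ℝ) 1)
    (hD : 0 ≤ D)
    (Ω : Type*) [MeasureSpace Ω] [IsProbabilityMeasure (ℙ : Measure Ω)]
    (w : Fin n → Ω → EuclideanSpace ℝ (Fin d))
    (hmeas : ∀ i, Measurable (w i))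
    (hindep : iIndepFun w ℙ)
    (htail : ∀ i, (ℙ {ω | D < ‖w i ω‖}).toReal ≤ Real.exp (-(1 + 1 / β) / τ)) :
    1 - Real.exp (-(0.3 : ℝ) * n)
      ≤ (ℙ {ω | ∀ S : Finset (Fin n), (n : ℝ) * β ≤ S.card →
            (1 - τ) * S.card ≤ ((S.filter (fun i => ‖w i ω‖ ≤ D)).card : ℝ)}).toReal :=
  uniform_norm_concentration_general n d β τ D hβ hτ Ω w hindep htail
end

section
/- Let k ≥ 2, n ≥ 1, d ≥ 1, α ∈ (0,1], ψ ∈ (0,1], ε₀ ∈ (0,1/2), Δ > 0, and q ∈ (0,1) with 5/(2α·log(1/q)) < 1/2; set ξ := 5/(4α·log(1/q)). Let θ₁, …, θ_k ∈ ℝ^d with min_{g≠h} ‖θ_g − θ_h‖ ≥ Δ, let z : {1,…,n} → {1,…,k} with n_g* := |{i : z_i = g}| ≥ nα for every g, and let Y_i = θ_{z_i} + w_i where w₁, …, w_n are independent ℝ^d-valued random vectors with P[‖w_i‖ ≥ ε₀Δ] ≤ q for each i. Then with probability at least 1 − k·exp(−nα/4), the following holds simultaneously: for every finite collection of additional points x₁,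 …, x_M ∈ ℝ^d with M ≤ nα(1 − ψ), every family θ̂₁, …, θ̂_k ∈ ℝ^d with max_h ‖θ̂_h − θ_h‖ ≤ (1/2 − ε₀)Δ, and every labeling ẑ of the n + M combined points (Y₁,…,Y_n, x₁,…,x_M) that assigns each point a label a minimizing the distance from the point to θ̂_a, one has for every g ∈ {1,…,k}, writing n_{gg} := |{i ∈ {1,…,n} : z_i = g and ẑ labels Y_i with g}| and n_g := the total number of combined points labeled g by ẑ: n_{gg} ≥ n_g*(1 − ξ) and n_{gg}/n_g ≥ 1/2 + min{(ψ − 2ξ)/(2(2 − ψ)), 1/2 − ξ}. -/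
/-!
Call a sample point bad if its error has norm at least `ε₀Δ`. A good point `θ_g + w_i` is
within `ε₀Δ + (1/2 − ε₀)Δ < Δ/2` of `θ̂_g` and, by `Δ`-separation, farther than that from every
other estimate, so only bad points can be mislabelled. Hence, when fewer than `ξnα` points are bad,
both bounds follow by counting from `n_g* ≥ nα` and `M ≤ nα(1 − ψ)`, uniformly in the outliers,
the estimates and the labeling. The number of bad points is a sum of independent indicators
with means at most `q`; at `λ = log (1/q)` each has moment generating function at most `2`, so the
Chernoff bound gives `P(at least ξnα bad) ≤ q^{ξnα} 2ⁿ = e^{-5n/4} 2ⁿ ≤ e^{-n/4}`.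
-/

open MeasureTheory ProbabilityTheory Finset Real

lemma exp_mul_indicator_one {Ω : Type*} (A : Set Ω) (t : ℝ) (ω : Ω) :
    exp (t * A.indicator 1 ω) = 1 + A.indicator (fun _ => exp t - 1) ω := by
  by_cases h : ω ∈ A <;> simp [h]

section Chernoff

variable {Ω ι : Type*} [MeasurableSpace Ω] {μ : Measure Ω}

lemma mgf_indicator_one [IsProbabilityMeasure μ] {A : Set Ω} (hA : MeasurableSet A) (t : ℝ) :
    mgf (A.indicator 1) μ t = 1 + (exp t - 1) * μ.real A := by
  simp only [mgf, exp_mul_indicator_one]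
  rw [integral_add (integrable_const 1) ((integrable_const _).indicator hA),
    integral_indicator_const _ hA]
  simp [mul_comm]

lemma mgf_indicator_one_log_inv_le_two [IsProbabilityMeasure μ] {A : Set Ω}
    (hA : MeasurableSet A) {q : ℝ} (hq0 : 0 < q) (hq1 : q ≤ 1) (hAq : μ.real A ≤ q) :
    mgf (A.indicator 1) μ (log q⁻¹) ≤ 2 := by
  rw [mgf_indicator_one hA, exp_log (inv_pos.2 hq0)]
  have hmul : (q⁻¹ - 1) * μ.real A ≤ (q⁻¹ - 1) * q :=
    mul_le_mul_of_nonneg_left hAq (sub_nonneg.2 (one_le_inv₀ hq0 |>.2 hq1))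
  have hq : (q⁻¹ - 1) * q = 1 - q := by field_simp
  linarith

lemma measureReal_le_card_filter_mem_le [Fintype ι] {A : ι → Set Ω}
    [∀ i, DecidablePred (· ∈ A i)] (hA : ∀ i, MeasurableSet (A i)) (hindep : iIndepSet A μ)
    {q : ℝ} (hq0 : 0 < q) (hq1 : q ≤ 1) (hAq : ∀ i, μ.real (A i) ≤ q) (t : ℝ) :
    μ.real {ω | t ≤ #{i | ω ∈ A i}} ≤ q ^ t * 2 ^ Fintype.card ι := by
  have := hindep.isProbabilityMeasure
  set X : ι → Ω → ℝ := fun i => (A i).indicator 1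
  have hX : iIndepFun X μ := hindep.iIndepFun_indicator
  have hXmeas : ∀ i, Measurable (X i) := fun i => measurable_one.indicator (hA i)
  have hsum : ∀ ω, (∑ i, X i) ω = #{i | ω ∈ A i} := fun ω => by
    simp [X, Finset.sum_apply, Set.indicator_apply, Finset.sum_boole]
  have hL : 0 ≤ log q⁻¹ := log_nonneg (one_le_inv₀ hq0 |>.2 hq1)
  have hint : ∀ i ∈ (univ : Finset ι), Integrable (fun ω => exp (log q⁻¹ * X i ω)) μ :=
    fun i _ => by
      simp only [X, exp_mul_indicator_one]
      exact (integrable_const 1).add ((integrable_const _).indicator (hA i))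
  calc μ.real {ω | t ≤ #{i | ω ∈ A i}}
      = μ.real {ω | t ≤ (∑ i, X i) ω} := by simp only [hsum]
    _ ≤ exp (-log q⁻¹ * t) * mgf (∑ i, X i) μ (log q⁻¹) :=
        measure_ge_le_exp_mul_mgf t hL (hX.integrable_exp_mul_sum hXmeas hint)
    _ = q ^ t * ∏ i, mgf (X i) μ (log q⁻¹) := by
        rw [hX.mgf_sum hXmeas, log_inv, neg_neg, rpow_def_of_pos hq0]
    _ ≤ q ^ t * ∏ _i : ι, (2 : ℝ) := by
        gcongr with i
        · exact fun i _ => mgf_nonneg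
        · exact mgf_indicator_one_log_inv_le_two (hA i) hq0 hq1 (hAq i)
    _ = q ^ t * 2 ^ Fintype.card ι := by rw [prod_const, card_univ]

end Chernoff

lemma eq_of_isNearest_estimate {E K : Type*} [PseudoMetricSpace E] {θ θhat : K → E}
    {Δ r : ℝ} (hsep : ∀ g h, g ≠ h → Δ ≤ dist (θ g) (θ h)) (hest : ∀ h, dist (θhat h) (θ h) ≤ r)
    {y : E} {a b : K} (hy : 2 * (dist y (θ a) + r) < Δ)
    (hb : ∀ c, dist y (θhat b) ≤ dist y (θhat c)) : b = a := by
  by_contra hba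
  have hya : dist y (θhat a) ≤ dist y (θ a) + r := by
    calc dist y (θhat a) ≤ dist y (θ a) + dist (θhat a) (θ a) := dist_triangle_right _ _ _
      _ ≤ dist y (θ a) + r := by gcongr; exact hest a
  have hab : Δ ≤ 2 * (dist y (θ a) + r) := by
    calc Δ ≤ dist (θ a) (θ b) := hsep a b (Ne.symm hba)
      _ ≤ dist y (θ a) + dist y (θ b) := dist_triangle_left _ _ _
      _ ≤ dist y (θ a) + (dist y (θhat b) + dist (θhat b) (θ b)) := by
        gcongr; exact dist_triangle _ _ _
      _ ≤ 2 * (dist y (θ a) + r) := by linarith [hb a, hest b]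
  exact hy.not_ge hab

lemma eq_of_isNearest_estimate_of_norm_lt {E K : Type*} [SeminormedAddCommGroup E]
    {θ θhat : K → E} {Δ ε : ℝ} (hsep : ∀ g h, g ≠ h → Δ ≤ ‖θ g - θ h‖)
    (hest : ∀ h, ‖θhat h - θ h‖ ≤ (1 / 2 - ε) * Δ) {v : E} (hv : ‖v‖ < ε * Δ) {a b : K}
    (hb : ∀ c, ‖θ a + v - θhat b‖ ≤ ‖θ a + v - θhat c‖) : b = a := by
  refine eq_of_isNearest_estimate (fun g h hgh => (hsep g h hgh).trans_eq (dist_eq_norm _ _).symm)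
    (fun h => (dist_eq_norm _ _).trans_le (hest h)) ?_ (by simpa only [dist_eq_norm] using hb)
  rw [dist_self_add_left]
  linarith

section Counting

variable {ι κ K : Type*} [Fintype ι] [DecidableEq K]
  {z : ι → K} {zhat : ι ⊕ κ → K} {B : Finset ι}

lemma card_filter_eq_le_card_correct_add [DecidableEq ι] (hB : ∀ i ∉ B, zhat (.inl i) = z i)
    (g : K) :
    #{i | z i = g} ≤ #{i | z i = g ∧ zhat (.inl i) = g} + #B := by
  refine (card_le_card fun i hi => ?_).trans (card_union_le _ _)
  by_cases hiB : i ∈ B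
  · exact mem_union_right _ hiB
  · simp only [mem_filter, mem_univ, true_and] at hi
    simp [hi, hB i hiB]

lemma card_filter_label_le_card_correct_add [DecidableEq ι] [Fintype κ]
    (hB : ∀ i ∉ B, zhat (.inl i) = z i) (g : K) :
    #{j | zhat j = g} ≤ #{i | z i = g ∧ zhat (.inl i) = g} + #B + Fintype.card κ := by
  calc #{j | zhat j = g}
      ≤ #((({i | z i = g ∧ zhat (.inl i) = g} : Finset ι) ∪ B).disjSum univ) := by
        refine card_le_card fun j hj => ?_
        rcases j with i | m
        · by_cases hiB : i ∈ B
          · simp [hiB]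
          · simp_all
        · simp
    _ ≤ _ := by
        rw [card_disjSum, card_univ]
        gcongr
        exact card_union_le _ _

lemma card_correct_le_card_filter_label [Fintype κ] (g : K) :
    #{i | z i = g ∧ zhat (.inl i) = g} ≤ #{j | zhat j = g} :=
  card_le_card_of_injOn Sum.inl (fun i hi => by simp_all) Sum.inl_injective.injOn

lemma accuracy_of_card_bounds {T A N b M m ξ ψ : ℝ} (hm : 0 < m) (hξ0 : 0 ≤ ξ) (hξ1 : ξ < 1)
    (hψ : ψ ≤ 1) (hmT : m ≤ T) (hTA : T ≤ A + b) (hb : b ≤ ξ * m) (hAN : A ≤ N)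
    (hNA : N ≤ A + b + M) (hM : M ≤ m * (1 - ψ)) :
    T * (1 - ξ) ≤ A ∧ 1 / 2 + min ((ψ - 2 * ξ) / (2 * (2 - ψ))) (1 / 2 - ξ) ≤ A / N := by
  have hAT : T * (1 - ξ) ≤ A := by nlinarith
  have hAm : m * (1 - ξ) ≤ A := by nlinarith
  have hN : 0 < N := by nlinarith
  refine ⟨hAT, ?_⟩
  have hψ2 : 0 < 2 - ψ := by linarith
  calc 1 / 2 + min ((ψ - 2 * ξ) / (2 * (2 - ψ))) (1 / 2 - ξ)
      ≤ 1 / 2 + (ψ - 2 * ξ) / (2 * (2 - ψ)) := by gcongr; exact min_le_left _ _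
    _ = (1 - ξ) / (2 - ψ) := by field_simp; ring
    _ ≤ A / N := by
        rw [div_le_div_iff₀ hψ2 hN]
        nlinarith [mul_le_mul_of_nonneg_right hAm (by linarith : 0 ≤ 1 - ψ + ξ)]

lemma labeling_accuracy_of_forall_notMem_eq [DecidableEq ι] [Fintype κ]
    (hB : ∀ i ∉ B, zhat (.inl i) = z i) {m ξ ψ : ℝ} (hm : 0 < m) (hξ0 : 0 ≤ ξ) (hξ1 : ξ < 1)
    (hψ : ψ ≤ 1) (hBm : (#B : ℝ) ≤ ξ * m) (hκ : (Fintype.card κ : ℝ) ≤ m * (1 - ψ)) (g : K)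
    (hg : m ≤ #{i | z i = g}) :
    (#{i | z i = g} : ℝ) * (1 - ξ) ≤ #{i | z i = g ∧ zhat (.inl i) = g} ∧
      1 / 2 + min ((ψ - 2 * ξ) / (2 * (2 - ψ))) (1 / 2 - ξ)
        ≤ (#{i | z i = g ∧ zhat (.inl i) = g} : ℝ) / #{j | zhat j = g} := by
  apply accuracy_of_card_bounds hm hξ0 hξ1 hψ hg _ hBm _ _ hκ
  · exact_mod_cast card_filter_eq_le_card_correct_add hB g
  · exact_mod_cast card_correct_le_card_filter_label g
  · exact_mod_cast card_filter_label_le_card_correct_add hB g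

end Counting

lemma ProbabilityTheory.iIndepFun.iIndepSet_preimage {Ω ι β : Type*} [MeasurableSpace Ω]
    [MeasurableSpace β] {μ : Measure Ω} {f : ι → Ω → β} (hf : iIndepFun f μ)
    (hmeas : ∀ i, Measurable (f i)) {S : Set β} (hS : MeasurableSet S) :
    iIndepSet (fun i => f i ⁻¹' S) μ :=
  (iIndepSet_iff_meas_biInter fun i => hmeas i hS).2 fun s =>
    hf.measure_inter_preimage_eq_mul s fun _ _ => hS

lemma rpow_mul_two_pow_le_exp_neg {q t : ℝ} (hq0 : 0 < q) (n : ℕ)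
    (ht : log (1 / q) * t = 5 * n / 4) : q ^ t * 2 ^ n ≤ exp (-n / 4) := by
  have h2 : (2 : ℝ) ^ n ≤ exp n := by
    rw [← exp_one_pow]
    gcongr
    linarith [add_one_le_exp (1 : ℝ)]
  calc q ^ t * 2 ^ n ≤ exp (-(5 * n / 4)) * exp n := by
        rw [rpow_def_of_pos hq0, ← ht, one_div, log_inv, neg_mul, neg_neg]
        gcongr
    _ = exp (-n / 4) := by rw [← exp_add]; ring_nf

lemma one_sub_measureReal_le_of_compl_subset {Ω : Type*} [MeasurableSpace Ω] {μ : Measure Ω}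
    [IsProbabilityMeasure μ] {s t : Set Ω} (h : sᶜ ⊆ t) : 1 - μ.real s ≤ μ.real t := by
  have := measureReal_union_le (μ := μ) s sᶜ
  rw [Set.union_compl_self, probReal_univ] at this
  linarith [measureReal_mono (μ := μ) h]

theorem nearest_centroid_labeling_accuracy_with_outliers_general
    (k n d : ℕ) (hk : 2 ≤ k) (hn : 1 ≤ n)
    (α ψ ε₀ Δ q : ℝ) (hα : α ∈ Set.Ioc (0 : ℝ) 1) (hψ : ψ ∈ Set.Ioc (0 : ℝ) 1)
    (hq : q ∈ Set.Ioo (0 : ℝ) 1)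
    (hcond : 5 / (2 * α * Real.log (1 / q)) < 1 / 2)
    (ξ : ℝ) (hξ : ξ = 5 / (4 * α * Real.log (1 / q)))
    (θ : Fin k → EuclideanSpace ℝ (Fin d))
    (hsep : ∀ g h : Fin k, g ≠ h → Δ ≤ ‖θ g - θ h‖)
    (z : Fin n → Fin k)
    (hsize : ∀ g : Fin k,
      (n : ℝ) * α ≤ ((Finset.univ.filter (fun i => z i = g)).card : ℝ))
    (Ω : Type*) [MeasureSpace Ω] [IsProbabilityMeasure (ℙ : Measure Ω)]
    (w : Fin n → Ω → EuclideanSpace ℝ (Fin d))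
    (hmeas : ∀ i, Measurable (w i))
    (hindep : iIndepFun w ℙ)
    (htail : ∀ i, (ℙ {ω | ε₀ * Δ ≤ ‖w i ω‖}).toReal ≤ q) :
    1 - k * Real.exp (-((n : ℝ) * α) / 4)
      ≤ (ℙ {ω | ∀ M : ℕ, (M : ℝ) ≤ n * α * (1 - ψ) →
            ∀ x : Fin M → EuclideanSpace ℝ (Fin d),
            ∀ θhat : Fin k → EuclideanSpace ℝ (Fin d),
            (∀ h : Fin k, ‖θhat h - θ h‖ ≤ (1 / 2 - ε₀) * Δ) →
            ∀ zhat : Fin n ⊕ Fin M → Fin k,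
            (∀ j : Fin n ⊕ Fin M, ∀ a : Fin k,
              ‖(Sum.elim (fun i => θ (z i) + w i ω) x j) - θhat (zhat j)‖
                ≤ ‖(Sum.elim (fun i => θ (z i) + w i ω) x j) - θhat a‖) →
            ∀ g : Fin k,
              (((Finset.univ.filter (fun i => z i = g)).card : ℝ) * (1 - ξ)
                ≤ ((Finset.univ.filter
                    (fun i : Fin n => z i = g ∧ zhat (Sum.inl i) = g)).card : ℝ)) ∧
              (1 / 2 + min ((ψ - 2 * ξ) / (2 * (2 - ψ))) (1 / 2 - ξ)
                ≤ ((Finset.univ.filter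
                      (fun i : Fin n => z i = g ∧ zhat (Sum.inl i) = g)).card : ℝ)
                  / ((Finset.univ.filter
                      (fun j : Fin n ⊕ Fin M => zhat j = g)).card : ℝ))}).toReal := by
  obtain ⟨hα0, hα1⟩ := hα
  obtain ⟨hq0, hq1⟩ := hq
  have hL : 0 < Real.log (1 / q) := log_pos (by rw [one_div]; exact one_lt_inv₀ hq0 |>.2 hq1)
  have hξ0 : 0 < ξ := by rw [hξ]; positivity
  have hξ1 : ξ < 1 := by
    have : 5 / (2 * α * Real.log (1 / q)) = 2 * ξ := by rw [hξ]; field_simp; ring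
    linarith
  have hnα : 0 < (n : ℝ) * α := mul_pos (Nat.cast_pos.2 hn) hα0
  set A : Fin n → Set Ω := fun i => {ω | ε₀ * Δ ≤ ‖w i ω‖}
  have hS : MeasurableSet {v : EuclideanSpace ℝ (Fin d) | ε₀ * Δ ≤ ‖v‖} :=
    measurableSet_le measurable_const measurable_norm
  set bad := {ω | ξ * (n * α) ≤ #{i | ω ∈ A i}}
  have hbad : (ℙ : Measure Ω).real bad ≤ exp (-n / 4) := by
    refine (measureReal_le_card_filter_mem_le (A := A) (fun i => hmeas i hS)
      (hindep.iIndepSet_preimage hmeas hS) hq0 hq1.le htail _).trans ?_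
    simpa using rpow_mul_two_pow_le_exp_neg hq0 n (t := ξ * (n * α)) (by rw [hξ]; field_simp)
  have hexp : exp (-n / 4) ≤ k * exp (-(n * α) / 4) := by
    have hk1 : (1 : ℝ) ≤ k := by exact_mod_cast one_le_two.trans hk
    calc exp (-n / 4) ≤ exp (-(n * α) / 4) := by gcongr; nlinarith
      _ ≤ k * exp (-(n * α) / 4) := le_mul_of_one_le_left (exp_pos _).le hk1
  refine le_trans (by linarith) (one_sub_measureReal_le_of_compl_subset (μ := ℙ) (s := bad) ?_)
  intro ω hω M hM x θhat hθhat zhat hzhat g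
  have hfew : (#{i | ω ∈ A i} : ℝ) < ξ * (n * α) := not_le.1 hω
  exact labeling_accuracy_of_forall_notMem_eq (B := {i | ω ∈ A i})
    (fun i hi => eq_of_isNearest_estimate_of_norm_lt hsep hθhat (by simpa [A] using hi)
      (hzhat (.inl i)))
    hnα hξ0.le hξ1 hψ.2 hfew.le (by simpa using hM) g (hsize g)

/-- Labeling-step accuracy in the presence of adversarial outliers (Lemma
`Hs-Ls-bound-genr-out`(i) of the paper, stated uniformly): with probability at
least `1 − k·exp(−nα/4)`, for every collection of at most `nα(1−ψ)` additional
outlier points, every family of centroid estimates within `(1/2 − ε₀)Δ` of the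
true centroids, and every nearest-estimated-centroid labeling of the combined
points, each cluster `g` satisfies `n_{gg} ≥ n_g*(1 − ξ)` and
`n_{gg}/n_g ≥ 1/2 + min{(ψ − 2ξ)/(2(2 − ψ)), 1/2 − ξ}`. -/
theorem nearest_centroid_labeling_accuracy_with_outliers
    (k n d : ℕ) (hk : 2 ≤ k) (hn : 1 ≤ n) (hd : 1 ≤ d)
    (α ψ ε₀ Δ q : ℝ) (hα : α ∈ Set.Ioc (0 : ℝ) 1) (hψ : ψ ∈ Set.Ioc (0 : ℝ) 1)
    (hε₀ : ε₀ ∈ Set.Ioo (0 : ℝ) (1 / 2)) (hΔ : 0 < Δ)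
    (hq : q ∈ Set.Ioo (0 : ℝ) 1)
    (hcond : 5 / (2 * α * Real.log (1 / q)) < 1 / 2)
    (ξ : ℝ) (hξ : ξ = 5 / (4 * α * Real.log (1 / q)))
    (θ : Fin k → EuclideanSpace ℝ (Fin d))
    (hsep : ∀ g h : Fin k, g ≠ h → Δ ≤ ‖θ g - θ h‖)
    (z : Fin n → Fin k)
    (hsize : ∀ g : Fin k,
      (n : ℝ) * α ≤ ((Finset.univ.filter (fun i => z i = g)).card : ℝ))
    (Ω : Type*) [MeasureSpace Ω] [IsProbabilityMeasure (ℙ : Measure Ω)]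
    (w : Fin n → Ω → EuclideanSpace ℝ (Fin d))
    (hmeas : ∀ i, Measurable (w i))
    (hindep : iIndepFun w ℙ)
    (htail : ∀ i, (ℙ {ω | ε₀ * Δ ≤ ‖w i ω‖}).toReal ≤ q) :
    1 - k * Real.exp (-((n : ℝ) * α) / 4)
      ≤ (ℙ {ω | ∀ M : ℕ, (M : ℝ) ≤ n * α * (1 - ψ) →
            ∀ x : Fin M → EuclideanSpace ℝ (Fin d),
            ∀ θhat : Fin k → EuclideanSpace ℝ (Fin d),
            (∀ h : Fin k, ‖θhat h - θ h‖ ≤ (1 / 2 - ε₀) * Δ) →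
            ∀ zhat : Fin n ⊕ Fin M → Fin k,
            (∀ j : Fin n ⊕ Fin M, ∀ a : Fin k,
              ‖(Sum.elim (fun i => θ (z i) + w i ω) x j) - θhat (zhat j)‖
                ≤ ‖(Sum.elim (fun i => θ (z i) + w i ω) x j) - θhat a‖) →
            ∀ g : Fin k,
              (((Finset.univ.filter (fun i => z i = g)).card : ℝ) * (1 - ξ)
                ≤ ((Finset.univ.filter
                    (fun i : Fin n => z i = g ∧ zhat (Sum.inl i) = g)).card : ℝ)) ∧
              (1 / 2 + min ((ψ - 2 * ξ) / (2 * (2 - ψ))) (1 / 2 - ξ)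
                ≤ ((Finset.univ.filter
                      (fun i : Fin n => z i = g ∧ zhat (Sum.inl i) = g)).card : ℝ)
                  / ((Finset.univ.filter
                      (fun j : Fin n ⊕ Fin M => zhat j = g)).card : ℝ))}).toReal :=
  nearest_centroid_labeling_accuracy_with_outliers_general k n d hk hn α ψ ε₀ Δ q hα hψ hq hcond ξ
    hξ θ hsep z hsize Ω w hmeas hindep htail
end

section
/- Let k ≥ 1, n ≥ 1, d ≥ 1, α ∈ (0,1], γ ∈ (10/(nα), 1/2), τ := γ/(1 + 2γ), δ ∈ (1/2 − γ/4, 1/2), and D ≥ 0. Let T₁*, …, T_k* be a partition of {1,…,n} with n_h* := |T_h*| ≥ nα for every h, let θ₁, …, θ_k ∈ ℝ^d, and let Y_i = θ_h + w_i for i ∈ T_h*, where w₁, …, w_n are independent ℝ^d-valued random vectors with P[‖w_i‖ > D] ≤ exp(−(1 + 2/α)/τ) for each i. Then with probability at least 1 − e^{−0.3n}, the following holds simultaneously: for every partition T₁, …, T_k of {1,…,n} such that |T_h ∩ T_h*| ≥ (1/2 + γ)·max(|T_h*|, |T_h|) for every h, every trimmed mean θ̂_h = TM_δ((Y_j)_{j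 ∈ T_h}) satisfies ‖θ̂_h − θ_h‖ ≤ 8D for every h ∈ {1,…,k}. -/
open MeasureTheory ProbabilityTheory Filter Finset

/-- For a finite family of points `(X_j)_{j ∈ T}` with `N = |T|`,
`trimRadius δ T X i` is the smallest `r ≥ 0` such that at least
`⌈(1−δ)N⌉` indices `j ∈ T` satisfy `‖X_j − X_i‖ ≤ r`. -/
noncomputable def trimRadius {ι : Type*} {d : ℕ} (δ : ℝ)
    (T : Finset ι) (X : ι → EuclideanSpace ℝ (Fin d)) (i : ι) : ℝ :=
  sInf {r : ℝ | 0 ≤ r ∧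
    ⌈(1 - δ) * (T.card : ℝ)⌉₊ ≤ (T.filter (fun j => ‖X j - X i‖ ≤ r)).card}

/-- `θhat` is a trimmed mean `TM_δ((X_j)_{j∈T})`: for some `i* ∈ T` minimizing
the trimmed radius, `θhat` is the average of the points indexed by an
`⌈(1−δ)N⌉`-element subset `V` of `{j ∈ T : ‖X_j − X_{i*}‖ ≤ R_{i*}}`. -/
def IsTrimmedMean {ι : Type*} {d : ℕ} (δ : ℝ) (T : Finset ι)
    (X : ι → EuclideanSpace ℝ (Fin d)) (θhat : EuclideanSpace ℝ (Fin d)) : Prop :=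
  ∃ istar ∈ T,
    (∀ j ∈ T, trimRadius δ T X istar ≤ trimRadius δ T X j) ∧
    ∃ V : Finset ι,
      V ⊆ T.filter (fun j => ‖X j - X istar‖ ≤ trimRadius δ T X istar) ∧
      V.card = ⌈(1 - δ) * (T.card : ℝ)⌉₊ ∧
      θhat = ((⌈(1 - δ) * (T.card : ℝ)⌉₊ : ℝ))⁻¹ • ∑ j ∈ V, X j

/-!
Call an index bad if its noise exceeds `D`. By independence and a union bound over
`m`-subsets, at least `m = ⌊3γαn/8⌋` bad indices occur with probability at most
`C(n, m) e^{-sm} ≤ e^{-0.3 n}`, where `s = (1 + 2/α)/τ ≥ 2/(γα) + 2`. Outside this event, the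
good indices of `T_h ∩ T_h*` lie within `D` of `θ_h` and outnumber the `⌈(1-δ)|T_h|⌉` points a
trimmed mean keeps. Hence every trimmed radius is at most `2D`, the kept points meet the good
ones, so they lie within `5D` of `θ_h`, and so does their average.
-/

lemma norm_inv_card_smul_sum_sub_le {ι E : Type*} [SeminormedAddCommGroup E] [NormedSpace ℝ E]
    {V : Finset ι} (hV : V.Nonempty) {x : ι → E} {c : E} {r : ℝ}
    (hx : ∀ j ∈ V, ‖x j - c‖ ≤ r) : ‖(#V : ℝ)⁻¹ • ∑ j ∈ V, x j - c‖ ≤ r := by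
  rw [← mem_closedBall_iff_norm, smul_sum]
  refine (convex_closedBall c r).sum_mem (fun _ _ => by positivity) ?_
    (fun j hj => mem_closedBall_iff_norm.2 (hx j hj))
  rw [sum_const, nsmul_eq_mul, mul_inv_cancel₀ (by exact_mod_cast hV.card_pos.ne')]

lemma choose_le_exp (n m : ℕ) (t : ℝ) :
    (n.choose m : ℝ) ≤ Real.exp (n * Real.exp (-t) + t * m) := by
  calc (n.choose m : ℝ) ≤ (n : ℝ) ^ m / m.factorial := Nat.choose_le_pow_div m n
    _ = (n * Real.exp (-t)) ^ m / m.factorial * Real.exp (t * m) := by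
      have : Real.exp (-t) ^ m * Real.exp (t * m) = 1 := by
        rw [← Real.exp_nat_mul, ← Real.exp_add, ← Real.exp_zero]; ring_nf
      rw [mul_pow, div_mul_eq_mul_div, mul_assoc, this, mul_one]
    _ ≤ Real.exp (n * Real.exp (-t)) * Real.exp (t * m) := by
      gcongr; exact Real.pow_div_factorial_le_exp _ (by positivity) m
    _ = Real.exp (n * Real.exp (-t) + t * m) := (Real.exp_add _ _).symm

lemma exp_neg_two_le : Real.exp (-2) ≤ 1 / 4 := by
  have := Real.quadratic_le_exp_of_nonneg (x := 2) (by norm_num)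
  rw [Real.exp_neg, inv_le_comm₀ (Real.exp_pos 2) (by norm_num)]
  linarith

lemma choose_floor_mul_exp_neg_pow_le {n : ℕ} {x s : ℝ} (hx : 0 < x) (hxn : 10 < x * n)
    (hs : 2 / x + 2 ≤ s) :
    (n.choose ⌊3 * x * n / 8⌋₊ : ℝ) * Real.exp (-s) ^ ⌊3 * x * n / 8⌋₊
      ≤ Real.exp (-0.3 * n) := by
  set m := ⌊3 * x * n / 8⌋₊
  have hm : 11 * x * n / 40 ≤ m := by
    have := Nat.lt_floor_add_one (3 * x * n / 8); linarith
  have hsm : (2 / x + 2) * m ≤ s * m := by gcongr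
  have hxm : 0.55 * (n : ℝ) ≤ 2 / x * m := by
    calc 0.55 * (n : ℝ) = 2 / x * (11 * x * n / 40) := by field_simp; ring
      _ ≤ 2 / x * m := by gcongr
  calc (n.choose m : ℝ) * Real.exp (-s) ^ m
      ≤ Real.exp (n * Real.exp (-2) + 2 * m) * Real.exp (-s * m) := by
        rw [← Real.exp_nat_mul, mul_comm (m : ℝ)]
        gcongr
        exact choose_le_exp n m 2
    _ = Real.exp (n * Real.exp (-2) + 2 * m - s * m) := by rw [← Real.exp_add]; ring_nf
    _ ≤ Real.exp (-0.3 * n) := by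
        gcongr
        nlinarith [exp_neg_two_le, (n.cast_nonneg : (0 : ℝ) ≤ n)]

theorem ProbabilityTheory.iIndepFun.measureReal_le_card_filter_mem_le {ι Ω β : Type*} [Fintype ι]
    [MeasurableSpace Ω] [MeasurableSpace β] {μ : Measure Ω} [IsFiniteMeasure μ] {w : ι → Ω → β}
    (hw : iIndepFun w μ)
    {A : Set β} [DecidablePred (· ∈ A)] (hA : MeasurableSet A) {p : ℝ}
    (hp : ∀ i, μ.real (w i ⁻¹' A) ≤ p) (m : ℕ) :
    μ.real {ω | m ≤ #{i | w i ω ∈ A}} ≤ (Fintype.card ι).choose m * p ^ m := by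
  have hcover : {ω | m ≤ #{i | w i ω ∈ A}} ⊆
      ⋃ S ∈ powersetCard m (univ : Finset ι), ⋂ i ∈ S, w i ⁻¹' A := by
    intro ω hω
    obtain ⟨S, hS, hScard⟩ := exists_subset_card_eq hω
    simp only [Set.mem_iUnion, Set.mem_iInter]
    exact ⟨S, mem_powersetCard_univ.2 hScard, fun i hi => (mem_filter.1 (hS hi)).2⟩
  calc μ.real {ω | m ≤ #{i | w i ω ∈ A}}
      ≤ ∑ S ∈ powersetCard m (univ : Finset ι), μ.real (⋂ i ∈ S, w i ⁻¹' A) :=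
        (measureReal_mono hcover (measure_ne_top _ _)).trans (measureReal_biUnion_finset_le _ _)
    _ ≤ ∑ _S ∈ powersetCard m (univ : Finset ι), p ^ m := by
        refine sum_le_sum fun S hS => ?_
        rw [measureReal_def, hw.measure_inter_preimage_eq_mul S fun _ _ => hA,
          ENNReal.toReal_prod, ← (mem_powersetCard_univ.1 hS)]
        calc ∏ i ∈ S, (μ (w i ⁻¹' A)).toReal ≤ ∏ _i ∈ S, p :=
              prod_le_prod (fun _ _ => ENNReal.toReal_nonneg) fun i _ => hp i
          _ = p ^ #S := prod_const p
    _ = (Fintype.card ι).choose m * p ^ m := by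
        rw [sum_const, card_powersetCard, card_univ, nsmul_eq_mul]

lemma one_sub_le_measureReal_of_compl_subset {Ω : Type*} [MeasurableSpace Ω] {μ : Measure Ω}
    [IsProbabilityMeasure μ] {s t : Set Ω} (hts : tᶜ ⊆ s) {ε : ℝ} (ht : μ.real t ≤ ε) :
    1 - ε ≤ μ.real s := by
  have := measureReal_union_le (μ := μ) t tᶜ
  rw [Set.union_compl_self, probReal_univ] at this
  linarith [measureReal_mono hts (measure_ne_top μ s)]

section TrimmedMean

variable {ι : Type*} {d : ℕ} {δ : ℝ} {T : Finset ι} {X : ι → EuclideanSpace ℝ (Fin d)}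

lemma trimRadius_le {i : ι} {r : ℝ} (hr : 0 ≤ r)
    (hcard : ⌈(1 - δ) * (#T : ℝ)⌉₊ ≤ #(T.filter fun j => ‖X j - X i‖ ≤ r)) :
    trimRadius δ T X i ≤ r :=
  csInf_le ⟨0, fun _ hr => hr.1⟩ ⟨hr, hcard⟩

lemma trimRadius_le_of_forall_norm_sub_le {G : Finset ι} {c : EuclideanSpace ℝ (Fin d)} {D : ℝ}
    (hGT : G ⊆ T) (hG : ∀ j ∈ G, ‖X j - c‖ ≤ D) (hcard : ⌈(1 - δ) * (#T : ℝ)⌉₊ ≤ #G)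
    {i : ι} (hi : i ∈ G) : trimRadius δ T X i ≤ 2 * D := by
  have hD := (norm_nonneg _).trans (hG i hi)
  refine trimRadius_le (by positivity) (hcard.trans (card_le_card fun j hj => ?_))
  refine mem_filter.2 ⟨hGT hj, ?_⟩
  calc ‖X j - X i‖ ≤ ‖X j - c‖ + ‖c - X i‖ := norm_sub_le_norm_sub_add_norm_sub ..
    _ ≤ 2 * D := by rw [norm_sub_rev c]; linarith [hG j hj, hG i hi]

theorem IsTrimmedMean.norm_sub_le [DecidableEq ι] {θhat c : EuclideanSpace ℝ (Fin d)}
    {G : Finset ι} {D : ℝ} (htm : IsTrimmedMean δ T X θhat) (hδ : δ ≤ 1 / 2) (hGT : G ⊆ T)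
    (hG : ∀ j ∈ G, ‖X j - c‖ ≤ D) (hcard : ⌈(1 - δ) * (#T : ℝ)⌉₊ < #G) :
    ‖θhat - c‖ ≤ 5 * D := by
  obtain ⟨istar, -, hmin, V, hVsub, hVcard, rfl⟩ := htm
  have hVT : V ⊆ T := hVsub.trans (filter_subset _ _)
  have hhalf : #T ≤ 2 * #V := by
    rw [hVcard]
    exact_mod_cast (by nlinarith [Nat.le_ceil ((1 - δ) * (#T : ℝ))] :
      (#T : ℝ) ≤ 2 * ⌈(1 - δ) * (#T : ℝ)⌉₊)
  -- the trimmed subsample `V` meets the cluster `G`, which pins both `X istar` and its radius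
  obtain ⟨j₀, hj₀⟩ := inter_nonempty_of_card_lt_card_add_card hVT hGT (by omega)
  obtain ⟨hj₀V, hj₀G⟩ := mem_inter.1 hj₀
  have hR : trimRadius δ T X istar ≤ 2 * D :=
    (hmin j₀ (hGT hj₀G)).trans (trimRadius_le_of_forall_norm_sub_le hGT hG hcard.le hj₀G)
  have hstar : ‖X istar - c‖ ≤ 3 * D := by
    calc ‖X istar - c‖ ≤ ‖X istar - X j₀‖ + ‖X j₀ - c‖ := norm_sub_le_norm_sub_add_norm_sub ..
      _ ≤ 3 * D := by
        rw [norm_sub_rev]; linarith [(mem_filter.1 (hVsub hj₀V)).2, hG j₀ hj₀G]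
  rw [← hVcard]
  refine norm_inv_card_smul_sum_sub_le ⟨j₀, hj₀V⟩ fun j hj => ?_
  calc ‖X j - c‖ ≤ ‖X j - X istar‖ + ‖X istar - c‖ := norm_sub_le_norm_sub_add_norm_sub ..
    _ ≤ 5 * D := by linarith [(mem_filter.1 (hVsub hj)).2]

lemma ceil_lt_card_inter_sdiff [DecidableEq ι] {S B : Finset ι} {γ : ℝ}
    (hST : (1 / 2 + γ) * #T ≤ #(S ∩ T)) (hB : #B + 1 ≤ 3 * γ / 4 * #T)
    (hδ : 1 / 2 - γ / 4 < δ) (hδ₁ : δ ≤ 1) : ⌈(1 - δ) * (#T : ℝ)⌉₊ < #((S ∩ T) \ B) := by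
  have hsdiff : (#(S ∩ T) : ℝ) ≤ #((S ∩ T) \ B) + #B := by
    exact_mod_cast card_le_card_sdiff_add_card
  have hceil := Nat.ceil_lt_add_one (mul_nonneg (by linarith) (#T).cast_nonneg : 0 ≤ (1 - δ) * #T)
  exact_mod_cast (by nlinarith [(#T).cast_nonneg (α := ℝ)] :
    (⌈(1 - δ) * (#T : ℝ)⌉₊ : ℝ) < #((S ∩ T) \ B))

theorem IsTrimmedMean.norm_sub_le_of_overlap [DecidableEq ι] {S B : Finset ι}
    {θhat c : EuclideanSpace ℝ (Fin d)} {γ D : ℝ} (htm : IsTrimmedMean δ T X θhat)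
    (hδ : δ ∈ Set.Ioo (1 / 2 - γ / 4) (1 / 2))
    (hover : (1 / 2 + γ) * max (#S : ℝ) #T ≤ #(S ∩ T))
    (hB : #B + 1 ≤ 3 * γ / 8 * #S) (hX : ∀ j ∈ S \ B, ‖X j - c‖ ≤ D) :
    ‖θhat - c‖ ≤ 5 * D := by
  obtain ⟨hδ₀, hδ₁⟩ := hδ
  have hγ : 0 < γ := by linarith
  have hST : (#(S ∩ T) : ℝ) ≤ #T := by exact_mod_cast card_le_card inter_subset_right
  have hS : (#S : ℝ) ≤ 2 * #T := by
    nlinarith [le_max_left (#S : ℝ) #T, (#S).cast_nonneg (α := ℝ)]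
  refine htm.norm_sub_le hδ₁.le (sdiff_subset.trans inter_subset_right)
    (fun j hj => hX j (sdiff_subset_sdiff inter_subset_left subset_rfl hj))
    (ceil_lt_card_inter_sdiff ?_ (by nlinarith) hδ₀ (by linarith))
  nlinarith [le_max_right (#S : ℝ) #T]

end TrimmedMean

theorem trimmed_mean_uniform_centroid_bound_general
    (k n d : ℕ) (hn : 1 ≤ n)
    (α γ τ δ D : ℝ) (hα : α ∈ Set.Ioc (0 : ℝ) 1)
    (hγ : γ ∈ Set.Ioo (10 / (n * α)) (1 / 2))
    (hτ : τ = γ / (1 + 2 * γ))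
    (hδ : δ ∈ Set.Ioo (1 / 2 - γ / 4) (1 / 2)) (hD : 0 ≤ D)
    (z : Fin n → Fin k)
    (hsize : ∀ h : Fin k,
      (n : ℝ) * α ≤ ((Finset.univ.filter (fun i => z i = h)).card : ℝ))
    (θ : Fin k → EuclideanSpace ℝ (Fin d))
    (Ω : Type*) [MeasureSpace Ω] [IsProbabilityMeasure (ℙ : Measure Ω)]
    (w : Fin n → Ω → EuclideanSpace ℝ (Fin d))
    (hindep : iIndepFun w ℙ)
    (htail : ∀ i, (ℙ {ω | D < ‖w i ω‖}).toReal ≤ Real.exp (-(1 + 2 / α) / τ)) :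
    1 - Real.exp (-(0.3 : ℝ) * n)
      ≤ (ℙ {ω | ∀ zhat : Fin n → Fin k,
            (∀ h : Fin k,
              (1 / 2 + γ) * max ((Finset.univ.filter (fun i => z i = h)).card : ℝ)
                  ((Finset.univ.filter (fun i => zhat i = h)).card : ℝ)
                ≤ ((Finset.univ.filter (fun i => z i = h ∧ zhat i = h)).card : ℝ)) →
            ∀ h : Fin k, ∀ θhat : EuclideanSpace ℝ (Fin d),
              IsTrimmedMean δ (Finset.univ.filter (fun i => zhat i = h))
                (fun j => θ (z j) + w j ω) θhat →
              ‖θhat - θ h‖ ≤ 8 * D}).toReal := by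
  obtain ⟨hα₀, -⟩ := hα
  have hnα : 0 < n * α := mul_pos (by exact_mod_cast hn) hα₀
  have hγαn : 10 < γ * α * n := by
    have := (div_lt_iff₀ hnα).1 hγ.1; linarith
  have hγ₀ : 0 < γ := lt_trans (by positivity) hγ.1
  have hs : 2 / (γ * α) + 2 ≤ (1 + 2 / α) / τ := by
    rw [hτ, show (1 + 2 / α) / (γ / (1 + 2 * γ)) = 2 / (γ * α) + 2 + (1 / γ + 4 / α) by
      field_simp; ring]
    linarith [show 0 < 1 / γ + 4 / α by positivity]
  set m := ⌊3 * (γ * α) * n / 8⌋₊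
  have hbad : (ℙ : Measure Ω).real {ω | m ≤ #{i | w i ω ∈ {v | D < ‖v‖}}} ≤ Real.exp (-0.3 * n) :=
    (hindep.measureReal_le_card_filter_mem_le (measurableSet_lt measurable_const measurable_norm)
      (fun i => (htail i).trans_eq (by rw [neg_div])) m).trans
      (by simpa using choose_floor_mul_exp_neg_pow_le (by positivity) hγαn hs)
  refine one_sub_le_measureReal_of_compl_subset (fun ω hω zhat hover h θhat htm => ?_) hbad
  have hfew : #{i | D < ‖w i ω‖} < m := not_le.1 hω
  have hB : (#{i | D < ‖w i ω‖} : ℝ) + 1 ≤ 3 * γ / 8 * #{i | z i = h} := by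
    calc (#{i | D < ‖w i ω‖} : ℝ) + 1 ≤ m := by exact_mod_cast hfew
      _ ≤ 3 * (γ * α) * n / 8 := Nat.floor_le (by positivity)
      _ ≤ 3 * γ / 8 * #{i | z i = h} := by nlinarith [hsize h]
  refine (htm.norm_sub_le_of_overlap (c := θ h) (D := D) hδ
    (by rw [← filter_and]; exact hover h) hB fun j hj => ?_).trans (by linarith)
  simp only [Finset.mem_sdiff, mem_filter, mem_univ, true_and, not_lt] at hj
  rw [hj.1, add_sub_cancel_left]
  exact hj.2

/-- Uniform centroid-estimation guarantee for the trimmed mean (Proposition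
`Lambda-bound` combined with the norm-concentration event of the paper): with
probability at least `1 − e^{−0.3n}`, for every partition `T₁,…,T_k` of
`{1,…,n}` (encoded by the label map `ẑ`) with
`|T_h ∩ T_h*| ≥ (1/2 + γ)·max(|T_h*|, |T_h|)` for every `h`, every trimmed mean
`θ̂_h = TM_δ((Y_j)_{j ∈ T_h})` satisfies `‖θ̂_h − θ_h‖ ≤ 8D`. -/
theorem trimmed_mean_uniform_centroid_bound
    (k n d : ℕ) (hk : 1 ≤ k) (hn : 1 ≤ n) (hd : 1 ≤ d)
    (α γ τ δ D : ℝ) (hα : α ∈ Set.Ioc (0 : ℝ) 1)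
    (hγ : γ ∈ Set.Ioo (10 / (n * α)) (1 / 2))
    (hτ : τ = γ / (1 + 2 * γ))
    (hδ : δ ∈ Set.Ioo (1 / 2 - γ / 4) (1 / 2)) (hD : 0 ≤ D)
    (z : Fin n → Fin k)
    (hsize : ∀ h : Fin k,
      (n : ℝ) * α ≤ ((Finset.univ.filter (fun i => z i = h)).card : ℝ))
    (θ : Fin k → EuclideanSpace ℝ (Fin d))
    (Ω : Type*) [MeasureSpace Ω] [IsProbabilityMeasure (ℙ : Measure Ω)]
    (w : Fin n → Ω → EuclideanSpace ℝ (Fin d))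
    (hmeas : ∀ i, Measurable (w i))
    (hindep : iIndepFun w ℙ)
    (htail : ∀ i, (ℙ {ω | D < ‖w i ω‖}).toReal ≤ Real.exp (-(1 + 2 / α) / τ)) :
    1 - Real.exp (-(0.3 : ℝ) * n)
      ≤ (ℙ {ω | ∀ zhat : Fin n → Fin k,
            (∀ h : Fin k,
              (1 / 2 + γ) * max ((Finset.univ.filter (fun i => z i = h)).card : ℝ)
                  ((Finset.univ.filter (fun i => zhat i = h)).card : ℝ)
                ≤ ((Finset.univ.filter (fun i => z i = h ∧ zhat i = h)).card : ℝ)) →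
            ∀ h : Fin k, ∀ θhat : EuclideanSpace ℝ (Fin d),
              IsTrimmedMean δ (Finset.univ.filter (fun i => zhat i = h))
                (fun j => θ (z j) + w j ω) θhat →
              ‖θhat - θ h‖ ≤ 8 * D}).toReal :=
  trimmed_mean_uniform_centroid_bound_general k n d hn α γ τ δ D hα hγ hτ hδ hD z hsize θ Ω w hindep
    htail
end

section
/- Let T be a finite index set with N = |T| ≥ 1, points X_j ∈ ℝ^d for j ∈ T, a point θ ∈ ℝ^d, D ≥ 0, γ ∈ (0, 1/2) with γ·N ≥ 5, and δ ∈ (1/2 − γ/4, 1/2). Suppose |{j ∈ T : ‖X_j − θ‖ ≤ D}| ≥ (1/2 + γ/2)·N. Then every trimmed mean θ̂ = TM_δ((X_j)_{j∈T}) satisfies ‖θ̂ − θ‖ ≤ 8D. -/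
open Finset

/-- Deterministic trimmed-mean estimation guarantee: if a `(1/2 + γ/2)`
fraction of the points lies within distance `D` of `θ`, then every trimmed
mean with truncation level `δ ∈ (1/2 − γ/4, 1/2)` is within `8D` of `θ`. -/
theorem trimmed_mean_deterministic_bound
    {ι : Type*} (d : ℕ) (hd : 1 ≤ d)
    (T : Finset ι) (hT : 1 ≤ T.card)
    (X : ι → EuclideanSpace ℝ (Fin d)) (θ : EuclideanSpace ℝ (Fin d))
    (D γ δ : ℝ) (hD : 0 ≤ D)
    (hγ : γ ∈ Set.Ioo (0 : ℝ) (1 / 2)) (hγN : 5 ≤ γ * T.card)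
    (hδ : δ ∈ Set.Ioo (1 / 2 - γ / 4) (1 / 2))
    (hmaj : (1 / 2 + γ / 2) * (T.card : ℝ)
      ≤ ((T.filter (fun j => ‖X j - θ‖ ≤ D)).card : ℝ)) :
    ∀ θhat : EuclideanSpace ℝ (Fin d),
      IsTrimmedMean δ T X θhat → ‖θhat - θ‖ ≤ 8 * D := by
  classical
  rintro θhat ⟨istar, histar, hmin, V, hVsub, hVcard, hθhat⟩
  set N := T.card with hN
  set m := ⌈(1 - δ) * (N : ℝ)⌉₊ with hm
  set G := T.filter (fun j => ‖X j - θ‖ ≤ D) with hG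
  have hN1 : (1 : ℝ) ≤ (N : ℝ) := by exact_mod_cast hT
  obtain ⟨hγ0, hγhalf⟩ := hγ
  obtain ⟨hδ1, hδ2⟩ := hδ
  have hN0 : (0 : ℝ) < N := lt_of_lt_of_le one_pos hN1
  -- m ≤ |G|
  have hceil_pos : (0:ℝ) ≤ (1 - δ) * N := by nlinarith
  have hmR : (m : ℝ) ≤ (G.card : ℝ) := by
    have h1 : (m : ℝ) < (1 - δ) * N + 1 := Nat.ceil_lt_add_one hceil_pos
    nlinarith
  have hmG : m ≤ G.card := by exact_mod_cast hmR
  -- m > N/2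
  have hm_half : (N : ℝ) / 2 < (m : ℝ) := by
    have := Nat.le_ceil ((1 - δ) * (N : ℝ))
    nlinarith
  have hm0 : (0 : ℝ) < (m : ℝ) := lt_of_le_of_lt (by positivity) hm_half
  -- G nonempty
  have hGne : G.Nonempty := by
    rw [← Finset.card_pos]
    have : (0:ℝ) < (G.card : ℝ) := lt_of_lt_of_le (by nlinarith) hmaj
    exact_mod_cast this
  obtain ⟨i, hiG⟩ := hGne
  have hiT : i ∈ T := Finset.mem_of_mem_filter i hiG
  have hiD : ‖X i - θ‖ ≤ D := (Finset.mem_filter.mp hiG).2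
  -- trimRadius at i ≤ 2D
  have hbdd : BddBelow {r : ℝ | 0 ≤ r ∧
      ⌈(1 - δ) * (T.card : ℝ)⌉₊ ≤ (T.filter (fun j => ‖X j - X i‖ ≤ r)).card} :=
    ⟨0, fun r hr => hr.1⟩
  have hmem : (2 * D) ∈ {r : ℝ | 0 ≤ r ∧
      ⌈(1 - δ) * (T.card : ℝ)⌉₊ ≤ (T.filter (fun j => ‖X j - X i‖ ≤ r)).card} := by
    refine ⟨by positivity, le_trans hmG (Finset.card_le_card ?_)⟩
    intro j hj
    obtain ⟨hjT, hjD⟩ := Finset.mem_filter.mp hj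
    refine Finset.mem_filter.mpr ⟨hjT, ?_⟩
    calc ‖X j - X i‖ ≤ ‖X j - θ‖ + ‖θ - X i‖ := norm_sub_le_norm_sub_add_norm_sub _ _ _
      _ ≤ D + D := add_le_add hjD (by rw [norm_sub_rev]; exact hiD)
      _ = 2 * D := by ring
  have hRi : trimRadius δ T X i ≤ 2 * D := csInf_le hbdd hmem
  have hR : trimRadius δ T X istar ≤ 2 * D := le_trans (hmin i hiT) hRi
  -- members of V are within 2D of X istar
  have hVball : ∀ j ∈ V, ‖X j - X istar‖ ≤ 2 * D := fun j hj =>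
    le_trans (Finset.mem_filter.mp (hVsub hj)).2 hR
  have hVT : V ⊆ T := hVsub.trans (Finset.filter_subset _ _)
  -- V ∩ G nonempty
  have hVG : (V ∩ G).Nonempty := by
    rw [← Finset.card_pos]
    have hunion : (V ∪ G).card ≤ N := Finset.card_le_card
      (Finset.union_subset hVT (Finset.filter_subset _ _))
    have hkey := Finset.card_union_add_card_inter V G
    have h2m : N < 2 * m := by
      have : (N : ℝ) < 2 * (m : ℝ) := by linarith
      exact_mod_cast this
    omega
  obtain ⟨j0, hj0⟩ := hVG
  have hj0V : j0 ∈ V := (Finset.mem_inter.mp hj0).1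
  have hj0D : ‖X j0 - θ‖ ≤ D := (Finset.mem_filter.mp (Finset.mem_inter.mp hj0).2).2
  -- each j ∈ V is within 5D of θ
  have hbound : ∀ j ∈ V, ‖X j - θ‖ ≤ 5 * D := by
    intro j hj
    calc ‖X j - θ‖ ≤ ‖X j - X istar‖ + ‖X istar - X j0‖ + ‖X j0 - θ‖ := by
          have h1 : X j - θ = (X j - X istar) + (X istar - X j0) + (X j0 - θ) := by abel
          rw [h1]; exact norm_add₃_le
      _ ≤ 2 * D + 2 * D + D := by
          refine add_le_add (add_le_add (hVball j hj) ?_) hj0D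
          rw [norm_sub_rev]; exact hVball j0 hj0V
      _ = 5 * D := by ring
  -- conclude
  have hmne : ((m : ℝ)) ≠ 0 := ne_of_gt hm0
  have hsplit : θhat - θ = ((m : ℝ))⁻¹ • ∑ j ∈ V, (X j - θ) := by
    rw [hθhat, Finset.sum_sub_distrib, smul_sub, Finset.sum_const, ← hVcard,
      ← Nat.cast_smul_eq_nsmul ℝ, hVcard, inv_smul_smul₀ hmne]
  rw [hsplit]
  have hnorm : ‖∑ j ∈ V, (X j - θ)‖ ≤ (m : ℝ) * (5 * D) := by
    calc ‖∑ j ∈ V, (X j - θ)‖ ≤ ∑ j ∈ V, ‖X j - θ‖ := norm_sum_le _ _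
      _ ≤ ∑ _j ∈ V, (5 * D) := Finset.sum_le_sum hbound
      _ = (m : ℝ) * (5 * D) := by rw [Finset.sum_const, hVcard]; simp [mul_comm]
  calc ‖((m : ℝ))⁻¹ • ∑ j ∈ V, (X j - θ)‖ = ((m : ℝ))⁻¹ * ‖∑ j ∈ V, (X j - θ)‖ := by
        rw [norm_smul, Real.norm_eq_abs, abs_of_pos (inv_pos.mpr hm0)]
    _ ≤ ((m : ℝ))⁻¹ * ((m : ℝ) * (5 * D)) := by
        exact mul_le_mul_of_nonneg_left hnorm (le_of_lt (inv_pos.mpr hm0))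
    _ = 5 * D := by field_simp
    _ ≤ 8 * D := by linarith
end

section
/- Let n ≥ 1, β ∈ (0,1), τ ∈ (0,1), and let S ⊆ {1,…,n} with |S| ≥ nβ. Let (V_i)_{i∈S} be independent random variables taking values in {0,1} with P[V_i = 1] ≤ exp(−(1 + 1/β)/τ) for each i ∈ S. Then P[Σ_{i∈S} V_i ≥ τ·|S|] ≤ e^{−n}. -/
open MeasureTheory ProbabilityTheory Finset
open scoped ENNReal

/-!
If the sum reaches `k = ⌈τ|S|⌉`, then some `k`-subset of `S` has all its `V i = 1`; a union bound
over these subsets and independence give probability at most `C(|S|, k) q^k` with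
`q = exp(-(1 + 1/β)/τ)`. Since `C(|S|, k) ≤ 2^|S| ≤ e^|S|` and `q^k ≤ q^(τ|S|) = e^(-(1 + 1/β)|S|)`,
this is at most `e^(-|S|/β) ≤ e^(-n)`.
-/

lemma Finset.sum_eq_card_filter_eq_one {ι : Type*} {s : Finset ι} {f : ι → ℕ}
    (hf : ∀ i ∈ s, f i = 0 ∨ f i = 1) : ∑ i ∈ s, f i = #{i ∈ s | f i = 1} := by
  rw [card_filter]
  refine sum_congr rfl fun i hi => ?_
  rcases hf i hi with h | h <;> simp [h]

lemma setOf_le_card_filter_eq_subset_biUnion_powersetCard {ι Ω β : Type*} [Fintype ι]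
    [DecidableEq β] (X : ι → Ω → β) (b : β) (k : ℕ) :
    {ω | k ≤ #{i | X i ω = b}} ⊆
      ⋃ T ∈ (univ : Finset ι).powersetCard k, ⋂ i ∈ T, {ω | X i ω = b} := by
  intro ω hω
  obtain ⟨T, hT, hTcard⟩ := exists_subset_card_eq hω
  refine Set.mem_biUnion (mem_powersetCard.mpr ⟨subset_univ T, hTcard⟩) ?_
  exact Set.mem_biInter fun i hi => (mem_filter.mp (hT hi)).2

lemma measure_le_card_filter_eq_le_choose_mul_pow {ι Ω β : Type*} [Fintype ι]
    [MeasurableSpace Ω] {μ : Measure Ω} [MeasurableSpace β] [MeasurableSingletonClass β]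
    [DecidableEq β]
    {X : ι → Ω → β} (hX : iIndepFun X μ) (b : β) {p : ℝ≥0∞}
    (hp : ∀ i, μ {ω | X i ω = b} ≤ p) (k : ℕ) :
    μ {ω | k ≤ #{i | X i ω = b}} ≤ (Fintype.card ι).choose k * p ^ k := by
  have hInter : ∀ T ∈ (univ : Finset ι).powersetCard k,
      μ (⋂ i ∈ T, {ω | X i ω = b}) ≤ p ^ k := by
    intro T hT
    rw [hX.meas_biInter (s := fun i => {ω | X i ω = b})
        fun i _ => ⟨{b}, measurableSet_singleton b, rfl⟩,
      ← (mem_powersetCard.mp hT).2, ← prod_const]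
    exact prod_le_prod' fun i _ => hp i
  calc μ {ω | k ≤ #{i | X i ω = b}}
      ≤ μ (⋃ T ∈ (univ : Finset ι).powersetCard k, ⋂ i ∈ T, {ω | X i ω = b}) :=
        measure_mono (setOf_le_card_filter_eq_subset_biUnion_powersetCard X b k)
    _ ≤ ∑ T ∈ (univ : Finset ι).powersetCard k, μ (⋂ i ∈ T, {ω | X i ω = b}) :=
        measure_biUnion_finset_le _ _
    _ ≤ ∑ _T ∈ (univ : Finset ι).powersetCard k, p ^ k := sum_le_sum hInter
    _ = (Fintype.card ι).choose k * p ^ k := by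
        rw [sum_const, card_powersetCard, card_univ, nsmul_eq_mul]

lemma Nat.choose_le_exp (s k : ℕ) : (s.choose k : ℝ) ≤ Real.exp s := by
  calc (s.choose k : ℝ) ≤ 2 ^ s := by exact_mod_cast s.choose_le_two_pow k
    _ ≤ Real.exp 1 ^ s := by gcongr; linarith [Real.add_one_le_exp (1 : ℝ)]
    _ = Real.exp s := by rw [← Real.exp_nat_mul, mul_one]

lemma choose_mul_exp_pow_le_exp_neg {n s k : ℕ} {β τ : ℝ} (hβ : 0 < β) (hτ : 0 < τ)
    (hs : n * β ≤ s) (hk : τ * s ≤ k) :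
    (s.choose k : ℝ) * Real.exp (-(1 + 1 / β) / τ) ^ k ≤ Real.exp (-n) := by
  have hexponent : (k : ℝ) * (-(1 + 1 / β) / τ) ≤ -s - s / β := by
    have hc : -(1 + 1 / β) / τ ≤ 0 :=
      div_nonpos_of_nonpos_of_nonneg (neg_nonpos.mpr (by positivity)) hτ.le
    calc (k : ℝ) * (-(1 + 1 / β) / τ) ≤ (τ * s) * (-(1 + 1 / β) / τ) :=
          mul_le_mul_of_nonpos_right hk hc
      _ = -s - s / β := by field_simp; ring
  have hsβ : (n : ℝ) ≤ s / β := (le_div_iff₀ hβ).mpr hs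
  calc (s.choose k : ℝ) * Real.exp (-(1 + 1 / β) / τ) ^ k
      ≤ Real.exp s * Real.exp (-s - s / β) := by
        rw [← Real.exp_nat_mul]
        gcongr
        exact s.choose_le_exp k
    _ = Real.exp (-(s / β)) := by rw [← Real.exp_add]; ring_nf
    _ ≤ Real.exp (-n) := by gcongr

theorem subset_bernoulli_tail_bound_general
    (n : ℕ) (β τ : ℝ)
    (hβ : β ∈ Set.Ioo (0 : ℝ) 1) (hτ : τ ∈ Set.Ioo (0 : ℝ) 1)
    (S : Finset (Fin n)) (hS : (n : ℝ) * β ≤ S.card)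
    (Ω : Type*) [MeasureSpace Ω] [IsProbabilityMeasure (ℙ : Measure Ω)]
    (V : Fin n → Ω → ℕ)
    (h01 : ∀ i ∈ S, ∀ ω, V i ω = 0 ∨ V i ω = 1)
    (hindep : iIndepFun
      (fun i : {i : Fin n // i ∈ S} => V i.1) ℙ)
    (hq : ∀ i ∈ S, (ℙ {ω | V i ω = 1}).toReal ≤ Real.exp (-(1 + 1 / β) / τ)) :
    (ℙ {ω | τ * (S.card : ℝ) ≤ ((∑ i ∈ S, V i ω : ℕ) : ℝ)}).toReal
      ≤ Real.exp (-(n : ℝ)) := by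
  obtain ⟨hβ0, -⟩ := hβ
  set k := ⌈τ * (S.card : ℝ)⌉₊
  set q := Real.exp (-(1 + 1 / β) / τ)
  have hevent : {ω | τ * (S.card : ℝ) ≤ ((∑ i ∈ S, V i ω : ℕ) : ℝ)}
      = {ω | k ≤ #{j : S | V j ω = 1}} := by
    ext ω
    simp only [Set.mem_ofPred_eq]
    rw [Nat.ceil_le, ← sum_coe_sort S,
      sum_eq_card_filter_eq_one fun (j : S) _ => h01 j.1 j.2 ω]
  have hp : ∀ j : S, ℙ {ω | V j ω = 1} ≤ ENNReal.ofReal q := fun j =>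
    (ENNReal.le_ofReal_iff_toReal_le (measure_ne_top _ _) (Real.exp_pos _).le).mpr (hq j j.2)
  have hbound := measure_le_card_filter_eq_le_choose_mul_pow hindep 1 hp k
  rw [Fintype.card_coe, ← ENNReal.ofReal_pow (Real.exp_pos _).le, ← ENNReal.ofReal_natCast,
    ← ENNReal.ofReal_mul (Nat.cast_nonneg _), ← hevent] at hbound
  exact (ENNReal.toReal_le_of_le_ofReal (by positivity) hbound).trans
    (choose_mul_exp_pow_le_exp_neg hβ0 hτ.1 hS (Nat.le_ceil _))

/-- Per-subset Bernoulli tail bound from the proof of the uniform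
norm-concentration lemma: a sum of independent `{0,1}`-valued random variables
over a subset `S` with `|S| ≥ nβ`, each equal to `1` with probability at most
`exp(−(1 + 1/β)/τ)`, exceeds `τ|S|` with probability at most `e^{−n}`. -/
theorem subset_bernoulli_tail_bound
    (n : ℕ) (hn : 1 ≤ n) (β τ : ℝ)
    (hβ : β ∈ Set.Ioo (0 : ℝ) 1) (hτ : τ ∈ Set.Ioo (0 : ℝ) 1)
    (S : Finset (Fin n)) (hS : (n : ℝ) * β ≤ S.card)
    (Ω : Type*) [MeasureSpace Ω] [IsProbabilityMeasure (ℙ : Measure Ω)]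
    (V : Fin n → Ω → ℕ)
    (hmeas : ∀ i ∈ S, Measurable (V i))
    (h01 : ∀ i ∈ S, ∀ ω, V i ω = 0 ∨ V i ω = 1)
    (hindep : iIndepFun
      (fun i : {i : Fin n // i ∈ S} => V i.1) ℙ)
    (hq : ∀ i ∈ S, (ℙ {ω | V i ω = 1}).toReal ≤ Real.exp (-(1 + 1 / β) / τ)) :
    (ℙ {ω | τ * (S.card : ℝ) ≤ ((∑ i ∈ S, V i ω : ℕ) : ℝ)}).toReal
      ≤ Real.exp (-(n : ℝ)) :=
  subset_bernoulli_tail_bound_general n β τ hβ hτ S hS Ω V h01 hindep hq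
end

section
/- Let θ_g, θ_h, θ̂_g, θ̂_h, w ∈ ℝ^d and let Λ ∈ [0, 1/2). Assume ‖θ̂_g − θ_g‖ ≤ Λ·‖θ_g − θ_h‖ and ‖θ̂_h − θ_h‖ ≤ Λ·‖θ_g − θ_h‖. If ‖θ_g + w − θ̂_h‖ ≤ ‖θ_g + w − θ̂_g‖, then ‖w‖ ≥ ((1 − 2Λ)/(2(1 + 2Λ)))·‖θ_g − θ_h‖. -/
/-- Deterministic geometric fact underlying the labeling-step analysis: if the
centroid estimates `θ̂_g, θ̂_h` are each within `Λ‖θ_g − θ_h‖` of the true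
centroids with `Λ < 1/2`, and the point `θ_g + w` is at least as close to
`θ̂_h` as to `θ̂_g`, then `‖w‖ ≥ ((1 − 2Λ)/(2(1 + 2Λ)))·‖θ_g − θ_h‖`. -/
theorem mislabeled_point_has_large_error
    (d : ℕ) (hd : 1 ≤ d)
    (θg θh θhatg θhath w : EuclideanSpace ℝ (Fin d))
    (Λ : ℝ) (hΛ : Λ ∈ Set.Ico (0 : ℝ) (1 / 2))
    (hg : ‖θhatg - θg‖ ≤ Λ * ‖θg - θh‖)
    (hh : ‖θhath - θh‖ ≤ Λ * ‖θg - θh‖)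
    (hassign : ‖θg + w - θhath‖ ≤ ‖θg + w - θhatg‖) :
    (1 - 2 * Λ) / (2 * (1 + 2 * Λ)) * ‖θg - θh‖ ≤ ‖w‖ := by
  obtain ⟨hΛ0, hΛ2⟩ := hΛ
  have hΔ : (0:ℝ) ≤ ‖θg - θh‖ := norm_nonneg _
  have h1 : ‖θg + w - θhatg‖ ≤ ‖w‖ + Λ * ‖θg - θh‖ := by
    have : θg + w - θhatg = w - (θhatg - θg) := by abel
    rw [this]
    exact le_trans (norm_sub_le _ _) (by linarith)
  have h2 : ‖θg - θh‖ ≤ ‖θg + w - θhath‖ + ‖w‖ + Λ * ‖θg - θh‖ := by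
    have heq : θg - θh = (θg + w - θhath) - w + (θhath - θh) := by abel
    calc ‖θg - θh‖ = ‖(θg + w - θhath) - w + (θhath - θh)‖ := by rw [← heq]
      _ ≤ ‖(θg + w - θhath) - w‖ + ‖θhath - θh‖ := norm_add_le _ _
      _ ≤ ‖θg + w - θhath‖ + ‖w‖ + Λ * ‖θg - θh‖ := by
          have := norm_sub_le (θg + w - θhath) w
          linarith
  have key : (1 - 2 * Λ) / 2 * ‖θg - θh‖ ≤ ‖w‖ := by nlinarith
  have hle : (1 - 2 * Λ) / (2 * (1 + 2 * Λ)) * ‖θg - θh‖ ≤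
      (1 - 2 * Λ) / 2 * ‖θg - θh‖ := by
    apply mul_le_mul_of_nonneg_right _ hΔ
    apply div_le_div_of_nonneg_left (by linarith) (by norm_num) (by linarith)
  linarith
end

section
/- Let Y₁, …, Y_n ∈ ℝ^d, let θ₁, …, θ_k ∈ ℝ^d with ‖θ_g − θ_h‖ > 2c for all g ≠ h, let c > 0, and let m, a₁, …, a_k be positive integers such that |{j ∈ {1,…,n} : ‖Y_j − θ_i‖ ≤ c}| ≥ a_i for every i, a_{i₀} ≥ m for some i₀, and m + Σ_{i=1}^k a_i > n. For each j ∈ {1,…,n} let R_j be the smallest r ≥ 0 such that |{i ∈ {1,…,n} : ‖Y_i − Y_j‖ ≤ r}| ≥ m, and let j* minimize R_j over j ∈ {1,…,n}. Then min_{i ∈ {1,…,k}} ‖Y_{j*} − θ_i‖ ≤ 3c. -/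
open Finset

/-- `hdpRadius m Y j` is the smallest `r ≥ 0` such that at least `m` data
points lie within distance `r` of `Y_j`. -/
noncomputable def hdpRadius {n d : ℕ} (m : ℕ) (Y : Fin n → EuclideanSpace ℝ (Fin d))
    (j : Fin n) : ℝ :=
  sInf {r : ℝ | 0 ≤ r ∧
    m ≤ (Finset.univ.filter (fun i => ‖Y i - Y j‖ ≤ r)).card}

/-- Pigeonhole principle underlying the High Density Point (HDP)
initialization step: the data point whose tightest neighborhood containing `m`
data points has minimal radius must lie within `3c` of one of the true
centroids. -/
theorem high_density_point_near_centroid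
    (k n d : ℕ) (hk : 1 ≤ k) (hn : 1 ≤ n) (hd : 1 ≤ d)
    (Y : Fin n → EuclideanSpace ℝ (Fin d))
    (θ : Fin k → EuclideanSpace ℝ (Fin d))
    (c : ℝ) (hc : 0 < c)
    (hsep : ∀ g h : Fin k, g ≠ h → 2 * c < ‖θ g - θ h‖)
    (m : ℕ) (hm : 0 < m) (a : Fin k → ℕ) (ha : ∀ i, 0 < a i)
    (hcount : ∀ i : Fin k,
      a i ≤ (Finset.univ.filter (fun j => ‖Y j - θ i‖ ≤ c)).card)
    (hbig : ∃ i₀ : Fin k, m ≤ a i₀)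
    (htotal : n < m + ∑ i, a i)
    (jstar : Fin n)
    (hjstar : ∀ j : Fin n, hdpRadius m Y jstar ≤ hdpRadius m Y j) :
    ∃ i : Fin k, ‖Y jstar - θ i‖ ≤ 3 * c := by
  classical
  obtain ⟨i₀, hi₀⟩ := hbig
  -- find a data point j₀ within c of θ i₀
  have hcard₀ : 0 < (Finset.univ.filter (fun j => ‖Y j - θ i₀‖ ≤ c)).card :=
    lt_of_lt_of_le (lt_of_lt_of_le hm hi₀) (hcount i₀)
  obtain ⟨j₀, hj₀mem⟩ := Finset.card_pos.mp hcard₀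
  have hj₀c : ‖Y j₀ - θ i₀‖ ≤ c := (Finset.mem_filter.mp hj₀mem).2
  -- Step A : hdpRadius m Y jstar ≤ 2c
  have hsubA : Finset.univ.filter (fun j => ‖Y j - θ i₀‖ ≤ c) ⊆
      Finset.univ.filter (fun i => ‖Y i - Y j₀‖ ≤ 2 * c) := by
    intro i hi
    rw [Finset.mem_filter] at hi ⊢
    refine ⟨Finset.mem_univ _, ?_⟩
    have h1 : ‖Y i - Y j₀‖ ≤ ‖Y i - θ i₀‖ + ‖θ i₀ - Y j₀‖ := by
      calc ‖Y i - Y j₀‖ = ‖(Y i - θ i₀) + (θ i₀ - Y j₀)‖ := by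
            rw [sub_add_sub_cancel]
        _ ≤ ‖Y i - θ i₀‖ + ‖θ i₀ - Y j₀‖ := norm_add_le _ _
    have h2 : ‖θ i₀ - Y j₀‖ = ‖Y j₀ - θ i₀‖ := norm_sub_rev _ _
    linarith [hi.2]
  have hbdd : ∀ j : Fin n, BddBelow {r : ℝ | 0 ≤ r ∧
      m ≤ (Finset.univ.filter (fun i => ‖Y i - Y j‖ ≤ r)).card} :=
    fun j => ⟨0, fun x hx => hx.1⟩
  have hA : hdpRadius m Y jstar ≤ 2 * c := by
    refine (hjstar j₀).trans ?_
    refine csInf_le (hbdd j₀) ⟨by positivity, ?_⟩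
    calc m ≤ a i₀ := hi₀
      _ ≤ (Finset.univ.filter (fun j => ‖Y j - θ i₀‖ ≤ c)).card := hcount i₀
      _ ≤ _ := Finset.card_le_card hsubA
  -- m ≤ n
  have hmn : m ≤ n := by
    calc m ≤ a i₀ := hi₀
      _ ≤ (Finset.univ.filter (fun j => ‖Y j - θ i₀‖ ≤ c)).card := hcount i₀
      _ ≤ (Finset.univ : Finset (Fin n)).card := Finset.card_filter_le _ _
      _ = n := by simp
  -- the defining set for jstar is nonempty
  have hSne : Set.Nonempty {r : ℝ | 0 ≤ r ∧
      m ≤ (Finset.univ.filter (fun i => ‖Y i - Y jstar‖ ≤ r)).card} := by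
    refine ⟨∑ i, ‖Y i - Y jstar‖, Finset.sum_nonneg fun i _ => norm_nonneg _, ?_⟩
    have : Finset.univ.filter
        (fun i : Fin n => ‖Y i - Y jstar‖ ≤ ∑ j, ‖Y j - Y jstar‖) = Finset.univ := by
      refine Finset.filter_true_of_mem fun i _ => ?_
      exact Finset.single_le_sum (f := fun j : Fin n => ‖Y j - Y jstar‖)
        (fun j _ => norm_nonneg _) (Finset.mem_univ i)
    rw [this]
    simpa using hmn
  -- ε : a gap below all distances exceeding 2c
  obtain ⟨ε, hε, hεP⟩ : ∃ ε > 0, ∀ i : Fin n,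
      2 * c < ‖Y i - Y jstar‖ → 2 * c + ε ≤ ‖Y i - Y jstar‖ := by
    by_cases hF : (Finset.univ.filter
        (fun i : Fin n => 2 * c < ‖Y i - Y jstar‖)).Nonempty
    · obtain ⟨i₁, hi₁F, hi₁min⟩ :=
        Finset.exists_min_image _ (fun i => ‖Y i - Y jstar‖) hF
      have hi₁ : 2 * c < ‖Y i₁ - Y jstar‖ := (Finset.mem_filter.mp hi₁F).2
      refine ⟨‖Y i₁ - Y jstar‖ - 2 * c, by linarith, fun i hi => ?_⟩
      have := hi₁min i (Finset.mem_filter.mpr ⟨Finset.mem_univ _, hi⟩)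
      linarith
    · refine ⟨1, one_pos, fun i hi => absurd ⟨i, ?_⟩ hF⟩
      exact Finset.mem_filter.mpr ⟨Finset.mem_univ _, hi⟩
  -- Step B : at least m points within 2c of Y jstar
  have hAcard : m ≤ (Finset.univ.filter
      (fun j => ‖Y j - Y jstar‖ ≤ 2 * c)).card := by
    have hlt : hdpRadius m Y jstar < 2 * c + ε := lt_of_le_of_lt hA (by linarith)
    obtain ⟨s, hsS, hs⟩ := exists_lt_of_csInf_lt hSne hlt
    refine hsS.2.trans (Finset.card_le_card ?_)
    intro i hi
    rw [Finset.mem_filter] at hi ⊢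
    refine ⟨Finset.mem_univ _, ?_⟩
    by_contra h
    push_neg at h
    have := hεP i h
    linarith [hi.2]
  -- Step C : pigeonhole
  by_contra hcon
  push_neg at hcon
  set A : Finset (Fin n) :=
    Finset.univ.filter (fun j => ‖Y j - Y jstar‖ ≤ 2 * c) with hAdef
  set B : Fin k → Finset (Fin n) :=
    fun i => Finset.univ.filter (fun j => ‖Y j - θ i‖ ≤ c) with hBdef
  have hdisjAB : Disjoint A (Finset.univ.biUnion B) := by
    rw [Finset.disjoint_biUnion_right]
    intro i _
    rw [Finset.disjoint_left]
    intro j hjA hjB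
    have h1 : ‖Y j - Y jstar‖ ≤ 2 * c := (Finset.mem_filter.mp hjA).2
    have h2 : ‖Y j - θ i‖ ≤ c := (Finset.mem_filter.mp hjB).2
    have h3 : ‖Y jstar - θ i‖ ≤ ‖Y jstar - Y j‖ + ‖Y j - θ i‖ := by
      calc ‖Y jstar - θ i‖ = ‖(Y jstar - Y j) + (Y j - θ i)‖ := by
            rw [sub_add_sub_cancel]
        _ ≤ _ := norm_add_le _ _
    have h4 : ‖Y jstar - Y j‖ = ‖Y j - Y jstar‖ := norm_sub_rev _ _
    have := hcon i
    linarith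
  have hdisjBB : ∀ g ∈ (Finset.univ : Finset (Fin k)),
      ∀ h ∈ (Finset.univ : Finset (Fin k)), g ≠ h → Disjoint (B g) (B h) := by
    intro g _ h _ hgh
    rw [Finset.disjoint_left]
    intro j hjg hjh
    have h1 : ‖Y j - θ g‖ ≤ c := (Finset.mem_filter.mp hjg).2
    have h2 : ‖Y j - θ h‖ ≤ c := (Finset.mem_filter.mp hjh).2
    have h3 : ‖θ g - θ h‖ ≤ ‖θ g - Y j‖ + ‖Y j - θ h‖ := by
      calc ‖θ g - θ h‖ = ‖(θ g - Y j) + (Y j - θ h)‖ := by rw [sub_add_sub_cancel]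
        _ ≤ _ := norm_add_le _ _
    have h4 : ‖θ g - Y j‖ = ‖Y j - θ g‖ := norm_sub_rev _ _
    have := hsep g h hgh
    linarith
  have hsum : m + ∑ i, a i ≤ (A ∪ Finset.univ.biUnion B).card := by
    rw [Finset.card_union_of_disjoint hdisjAB, Finset.card_biUnion hdisjBB]
    exact Nat.add_le_add hAcard (Finset.sum_le_sum fun i _ => hcount i)
  have hle : (A ∪ Finset.univ.biUnion B).card ≤ n := by
    calc (A ∪ Finset.univ.biUnion B).card
        ≤ (Finset.univ : Finset (Fin n)).card := Finset.card_le_card (Finset.subset_univ _)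
      _ = n := by simp
  omega
end

section
/- Let Y₁, …, Y_n ∈ ℝ^d, let θ₁, θ₂ ∈ ℝ^d with ‖θ₁ − θ₂‖ ≥ Δ for some Δ > 0, and let a be a positive integer such that |{j ∈ {1,…,n} : ‖Y_j − θ_i‖ ≤ Δ/8}| ≥ a for i = 1, 2. Then for every S ⊆ {1,…,n} with |S| > n − a, there exist indices j₁, j₂ ∈ S with ‖Y_{j₁} − Y_{j₂}‖ ≥ 3Δ/4. -/
open Finset

lemma inter_nonempty_of_cards {n : ℕ} (S F : Finset (Fin n)) (a : ℕ)
    (hF : a ≤ F.card) (hS : n - a < S.card) : (S ∩ F).Nonempty := by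
  rw [← Finset.card_pos]
  have h1 : S.card + F.card ≤ (S ∪ F).card + (S ∩ F).card := by
    rw [Finset.card_union_add_card_inter]
  have h2 : (S ∪ F).card ≤ n := by
    simpa using Finset.card_le_card (Finset.subset_univ (S ∪ F))
  omega

/-- Geometric claim used in the initialization analysis: any subset of the
data of size greater than `n − a` must intersect the `Δ/8`-balls around both
well-separated centroids, hence contains two points at distance at least
`3Δ/4 = Δ − Δ/4`. -/
theorem large_subset_contains_far_points
    (n d : ℕ) (hn : 1 ≤ n) (hd : 1 ≤ d)
    (Y : Fin n → EuclideanSpace ℝ (Fin d))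
    (θ : Fin 2 → EuclideanSpace ℝ (Fin d))
    (Δ : ℝ) (hΔ : 0 < Δ) (hsep : Δ ≤ ‖θ 0 - θ 1‖)
    (a : ℕ) (ha : 0 < a)
    (hcount : ∀ i : Fin 2,
      a ≤ (Finset.univ.filter (fun j => ‖Y j - θ i‖ ≤ Δ / 8)).card) :
    ∀ S : Finset (Fin n), n - a < S.card →
      ∃ j₁ ∈ S, ∃ j₂ ∈ S, 3 * Δ / 4 ≤ ‖Y j₁ - Y j₂‖ := by
  intro S hS
  obtain ⟨j₁, hj₁⟩ := inter_nonempty_of_cards S _ a (hcount 0) hS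
  obtain ⟨j₂, hj₂⟩ := inter_nonempty_of_cards S _ a (hcount 1) hS
  rw [Finset.mem_inter, Finset.mem_filter] at hj₁ hj₂
  refine ⟨j₁, hj₁.1, j₂, hj₂.1, ?_⟩
  have h1 : ‖Y j₁ - θ 0‖ ≤ Δ / 8 := hj₁.2.2
  have h2 : ‖Y j₂ - θ 1‖ ≤ Δ / 8 := hj₂.2.2
  have key : ‖θ 0 - θ 1‖ ≤ ‖Y j₁ - θ 0‖ + ‖Y j₁ - Y j₂‖ + ‖Y j₂ - θ 1‖ := by
    have := norm_sub_le_norm_sub_add_norm_sub (θ 0) (Y j₁) (θ 1)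
    have := norm_sub_le_norm_sub_add_norm_sub (Y j₁) (Y j₂) (θ 1)
    have e : ‖θ 0 - Y j₁‖ = ‖Y j₁ - θ 0‖ := norm_sub_rev _ _
    linarith
  linarith
end

section
/- Let σ > 0, c_G > 0, Δ ≥ 2σc_G, and let G : [0,∞) → ℝ be continuously differentiable with G(0) = 1, G'(x) ≤ 0 for all x ≥ 0, G(x) → 0 as x → ∞, and x ↦ |G'(x)| monotonically decreasing on (c_G, ∞). Then (1/(4σ)) · ∫_{−∞}^{∞} |G'(|y + Δ/2|/σ) − G'(|y − Δ/2|/σ)| dy ≤ 1 − (1/2)·G(Δ/(2σ) + 2c_G). -/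
open MeasureTheory Filter Set Topology

/-!
Put `g = -G'`, a nonnegative function on `(0, ∞)` with tail integrals `∫_p^∞ g = G p`. The
substitution `y = σu - Δ/2` turns the integral into `σ ∫ |g|u| - g|u - 2a||` with
`a = Δ/(2σ) ≥ c_G`, and `|P - Q| = P + Q - 2 min P Q` turns that into `σ (4 - 2 ∫ min)`.
For `u > a` outside the window `(2a - c_G, 2a + c_G]` we have `c_G < |u - 2a| ≤ u`, so, `g` being
antitone beyond `c_G`, the minimum is `g u`; hence `∫ min ≥ G a - (G (2a - c_G) - G (2a + c_G))`.
Finally `x ↦ G x - G (x + 2c_G)` has derivative `g (x + 2c_G) - g x ≤ 0` on `(c_G, ∞)`, so the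
mass of `g` in the window is at most `G a - G (a + 2c_G)`, and `∫ min ≥ G (a + 2c_G)`.
-/

lemma integrable_comp_abs {E : Type*} [NormedAddCommGroup E] {f : ℝ → E}
    (hf : IntegrableOn f (Ioi 0)) : Integrable (fun x => f |x|) := by
  have hpos : IntegrableOn (fun x => f |x|) (Ioi 0) :=
    hf.congr_fun (fun x hx => by rw [abs_of_pos hx]) measurableSet_Ioi
  have hneg : IntegrableOn (fun x => f |x|) (Iic 0) := by
    rw [integrableOn_Iic_iff_integrableOn_Iio, ← Measure.map_neg_eq_self (volume : Measure ℝ)]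
    have hemb : MeasurableEmbedding fun x : ℝ => -x := (Homeomorph.neg ℝ).measurableEmbedding
    rw [hemb.integrableOn_map_iff]
    simpa [Function.comp_def] using hpos
  simpa [← integrableOn_univ] using hneg.union hpos

lemma integral_abs_sub_eq_sub_two_mul_integral_min {α : Type*} [MeasurableSpace α]
    {μ : Measure α} {P Q : α → ℝ} (hP : Integrable P μ) (hQ : Integrable Q μ) :
    ∫ x, |P x - Q x| ∂μ = ∫ x, P x ∂μ + ∫ x, Q x ∂μ - 2 * ∫ x, min (P x) (Q x) ∂μ := by
  have hpt : ∀ x, |P x - Q x| = P x + Q x - 2 * min (P x) (Q x) := fun x => by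
    rw [← max_sub_min_eq_abs']
    linarith [min_add_max (P x) (Q x)]
  have hmin : Integrable (fun x => min (P x) (Q x)) μ := hP.inf hQ
  simp_rw [hpt]
  rw [integral_sub (f := fun x => P x + Q x) (hP.add hQ) (hmin.const_mul 2), integral_add hP hQ,
    integral_const_mul]

lemma integral_comp_add_div {E : Type*} [NormedAddCommGroup E] [NormedSpace ℝ E] (H : ℝ → E)
    (m : ℝ) {σ : ℝ} (hσ : 0 < σ) : ∫ y, H ((y + m) / σ) = σ • ∫ u, H u := by
  rw [integral_add_right_eq_self (fun y => H (y / σ)) m, Measure.integral_comp_div, abs_of_pos hσ]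

lemma antitoneOn_sub_comp_add_const {G G' : ℝ → ℝ} {c L : ℝ} (hL : 0 ≤ L)
    (hcont : ContinuousOn G (Ici c)) (hderiv : ∀ x ∈ Ioi c, HasDerivAt G (G' x) x)
    (hmono : MonotoneOn G' (Ioi c)) :
    AntitoneOn (fun x => G x - G (x + L)) (Ici c) := by
  have hshift : ∀ x ∈ Ioi c, x + L ∈ Ioi c := fun x hx => by
    simp only [mem_Ioi] at *; linarith
  refine antitoneOn_of_hasDerivWithinAt_nonpos (f' := fun x => G' x - G' (x + L))
    (convex_Ici c) ?_ ?_ ?_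
  · exact hcont.sub (hcont.comp (continuous_add_const L).continuousOn
      (fun x hx => by simp only [mem_Ici] at *; linarith))
  · rw [interior_Ici]
    exact fun x hx => ((hderiv x hx).sub
      ((hderiv (x + L) (hshift x hx)).comp_add_const x L)).hasDerivWithinAt
  · rw [interior_Ici]
    exact fun x hx => sub_nonpos.2 (hmono hx (hshift x hx) (le_add_of_nonneg_right hL))

lemma min_neg_deriv_abs_eq {G : ℝ → ℝ} {a c u : ℝ} (hmono : MonotoneOn (deriv G) (Ioi c))
    (ha : 0 ≤ a) (hua : a < u) (hcu : c < |u - 2 * a|) :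
    min (-deriv G |u|) (-deriv G |u - 2 * a|) = -deriv G u := by
  have hle : |u - 2 * a| ≤ u := abs_le.2 ⟨by linarith, by linarith⟩
  rw [abs_of_pos (ha.trans_lt hua)]
  exact min_eq_left (neg_le_neg (hmono hcu (hcu.trans_le hle) hle))

structure IsTailFunction (G : ℝ → ℝ) : Prop where
  continuousOn : ContinuousOn G (Ici 0)
  hasDerivAt : ∀ x, 0 < x → HasDerivAt G (deriv G x) x
  deriv_nonpos : ∀ x, 0 ≤ x → deriv G x ≤ 0
  tendsto_atTop : Tendsto G atTop (𝓝 0)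

namespace IsTailFunction

variable {G : ℝ → ℝ}

lemma integrableOn_Ioi_neg_deriv (hG : IsTailFunction G) {p : ℝ} (hp : 0 ≤ p) :
    IntegrableOn (fun x => -deriv G x) (Ioi p) :=
  (integrableOn_Ioi_deriv_of_nonpos ((hG.continuousOn p hp).mono (Ici_subset_Ici.2 hp))
    (fun x hx => hG.hasDerivAt x (hp.trans_lt hx)) (fun x hx => hG.deriv_nonpos x (hp.trans hx.le))
    hG.tendsto_atTop).neg

lemma integral_Ioi_neg_deriv (hG : IsTailFunction G) {p : ℝ} (hp : 0 ≤ p) :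
    ∫ x in Ioi p, -deriv G x = G p := by
  rw [integral_neg, integral_Ioi_of_hasDerivAt_of_nonpos
    ((hG.continuousOn p hp).mono (Ici_subset_Ici.2 hp))
    (fun x hx => hG.hasDerivAt x (hp.trans_lt hx)) (fun x hx => hG.deriv_nonpos x (hp.trans hx.le))
    hG.tendsto_atTop, zero_sub, neg_neg]

lemma integral_Ioc_neg_deriv (hG : IsTailFunction G) {p q : ℝ} (hp : 0 ≤ p) (hpq : p ≤ q) :
    ∫ x in Ioc p q, -deriv G x = G p - G q := by
  rw [← Ioi_sdiff_Ioi, setIntegral_sdiff measurableSet_Ioi (hG.integrableOn_Ioi_neg_deriv hp)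
    (Ioi_subset_Ioi hpq), hG.integral_Ioi_neg_deriv hp, hG.integral_Ioi_neg_deriv (hp.trans hpq)]

lemma integrable_neg_deriv_abs (hG : IsTailFunction G) : Integrable (fun u => -deriv G |u|) :=
  integrable_comp_abs (hG.integrableOn_Ioi_neg_deriv le_rfl)

lemma integral_neg_deriv_abs (hG : IsTailFunction G) : ∫ u, -deriv G |u| = 2 * G 0 := by
  rw [integral_comp_abs (f := fun x => -deriv G x), hG.integral_Ioi_neg_deriv le_rfl]

lemma le_integral_min_neg_deriv_abs (hG : IsTailFunction G) {a c : ℝ} (hc : 0 ≤ c) (hca : c ≤ a)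
    (hmono : MonotoneOn (deriv G) (Ioi c)) :
    G (a + 2 * c) ≤ ∫ u, min (-deriv G |u|) (-deriv G |u - 2 * a|) := by
  have ha : 0 ≤ a := hc.trans hca
  have hshift := antitoneOn_sub_comp_add_const (by positivity : 0 ≤ 2 * c)
    (hG.continuousOn.mono (Ici_subset_Ici.2 hc)) (fun x hx => hG.hasDerivAt x (hc.trans_lt hx)) hmono
    (mem_Ici.2 hca) (show 2 * a - c ∈ Ici c by simp only [mem_Ici]; linarith) (by linarith)
  simp only [show 2 * a - c + 2 * c = 2 * a + c by ring] at hshift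
  have hwin : Ioc (2 * a - c) (2 * a + c) ⊆ Ioi a := fun u hu => by
    simp only [mem_Ioc, mem_Ioi] at *; linarith
  have hmin : ∀ᵐ u, u ∈ Ioi a \ Ioc (2 * a - c) (2 * a + c) →
      min (-deriv G |u|) (-deriv G |u - 2 * a|) = -deriv G u := by
    -- at `u = 2a - c` we only have `|u - 2a| = c`, where `hmono` says nothing; a point is null
    filter_upwards [measure_eq_zero_iff_ae_notMem.1 (measure_singleton (2 * a - c))]
      with u hu ⟨hua, hwin⟩
    simp only [mem_singleton_iff, mem_Ioi, mem_Ioc, not_and_or, not_lt, not_le] at hu hua hwin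
    exact min_neg_deriv_abs_eq hmono ha hua
      (lt_abs.2 (hwin.symm.imp (fun h => by linarith) (fun h => by linarith [lt_of_le_of_ne h hu])))
  have hmin_int : Integrable (fun u => min (-deriv G |u|) (-deriv G |u - 2 * a|)) :=
    hG.integrable_neg_deriv_abs.inf (hG.integrable_neg_deriv_abs.comp_sub_right (2 * a))
  have hmin_nonneg : 0 ≤ᵐ[volume] fun u => min (-deriv G |u|) (-deriv G |u - 2 * a|) :=
    ae_of_all _ fun u => le_min (neg_nonneg.2 (hG.deriv_nonpos _ (abs_nonneg _)))
      (neg_nonneg.2 (hG.deriv_nonpos _ (abs_nonneg _)))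
  calc G (a + 2 * c)
      ≤ G a - G (2 * a - c) + G (2 * a + c) := by linarith
    _ = (∫ u in Ioi a, -deriv G u) - ∫ u in Ioc (2 * a - c) (2 * a + c), -deriv G u := by
        rw [hG.integral_Ioi_neg_deriv ha, hG.integral_Ioc_neg_deriv (by linarith) (by linarith)]
        ring
    _ = ∫ u in Ioi a \ Ioc (2 * a - c) (2 * a + c), -deriv G u :=
        (setIntegral_sdiff measurableSet_Ioc (hG.integrableOn_Ioi_neg_deriv ha) hwin).symm
    _ = ∫ u in Ioi a \ Ioc (2 * a - c) (2 * a + c), min (-deriv G |u|) (-deriv G |u - 2 * a|) :=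
        (setIntegral_congr_ae (measurableSet_Ioi.diff measurableSet_Ioc) hmin).symm
    _ ≤ ∫ u, min (-deriv G |u|) (-deriv G |u - 2 * a|) :=
        setIntegral_le_integral hmin_int hmin_nonneg

end IsTailFunction

/-- Key total-variation estimate in the proof of the minimax mislabeling lower
bound: for the density `y ↦ −(1/(2σ))·G'(|y|/σ)` and its location shifts by
`∓Δ/2`, the total variation distance is at most `1 − (1/2)·G(Δ/(2σ) + 2c_G)`. -/
theorem total_variation_shift_bound
    (σ c_G Δ : ℝ) (hσ : 0 < σ) (hc_G : 0 < c_G) (hΔ : 2 * σ * c_G ≤ Δ)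
    (G : ℝ → ℝ)
    (hG : ContDiffOn ℝ 1 G (Set.Ici 0))
    (hG0 : G 0 = 1)
    (hG' : ∀ x : ℝ, 0 ≤ x → deriv G x ≤ 0)
    (hGlim : Tendsto G atTop (nhds 0))
    (hanti : AntitoneOn (fun x => |deriv G x|) (Set.Ioi c_G)) :
    (1 / (4 * σ)) * (∫ y : ℝ, |deriv G (|y + Δ / 2| / σ) - deriv G (|y - Δ / 2| / σ)|)
      ≤ 1 - (1 / 2) * G (Δ / (2 * σ) + 2 * c_G) := by
  set a := Δ / (2 * σ)
  have hca : c_G ≤ a := by rw [le_div_iff₀ (by positivity)]; linarith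
  have hGtail : IsTailFunction G := ⟨hG.continuousOn, fun x hx =>
    ((hG.differentiableOn one_ne_zero).differentiableAt (Ici_mem_nhds hx)).hasDerivAt, hG', hGlim⟩
  have hmono : MonotoneOn (deriv G) (Ioi c_G) := fun x hx y hy hxy => by
    have h := hanti hx hy hxy
    simp only at h
    rwa [abs_of_nonpos (hG' x (hc_G.trans hx).le), abs_of_nonpos (hG' y (hc_G.trans hy).le),
      neg_le_neg_iff] at h
  have hrescale : ∫ y, |deriv G (|y + Δ / 2| / σ) - deriv G (|y - Δ / 2| / σ)|
      = σ • ∫ u, |(-deriv G |u|) - (-deriv G |u - 2 * a|)| := by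
    rw [← integral_comp_add_div _ (Δ / 2) hσ]
    congr with y
    have hy : (y + Δ / 2) / σ - 2 * a = (y - Δ / 2) / σ := by simp only [a]; field_simp; ring
    rw [neg_sub_neg, abs_sub_comm, hy, abs_div, abs_div, abs_of_pos hσ]
  have hlow := hGtail.le_integral_min_neg_deriv_abs hc_G.le hca hmono
  rw [hrescale, integral_abs_sub_eq_sub_two_mul_integral_min hGtail.integrable_neg_deriv_abs
    (hGtail.integrable_neg_deriv_abs.comp_sub_right (2 * a)),
    integral_sub_right_eq_self (fun u => -deriv G |u|), hGtail.integral_neg_deriv_abs, hG0,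
    smul_eq_mul]
  field_simp
  linarith
end

section
/- Let k ≥ 2 and let n, m, r be nonnegative integers with n = m + 3r and k dividing m. Partition {1,…,n} into blocks: for u ∈ {1,…,k}, B_u = {(u−1)m/k + 1, …, u·m/k}; C₁ = {m+1, …, m+r}; C₂ = {m+r+1, …, m+2r}; C₃ = {m+2r+1, …, n}. Let z, z' ∈ {1,…,k}^n satisfy: z_i = z'_i = u for i ∈ B_u (each u); z_i = z'_i = 1 for i ∈ C₁; z_i = z'_i = 2 for i ∈ C₂; and z_i, z'_i ∈ {1,2} for i ∈ C₃. Then the minimum over all maps π : {1,…,k} → {1,…,k} of Σ_{i=1}^n 1{π(z_i) ≠ z'_i} equals |{i ∈ C₃ : z_i ≠ z'_i}|. -/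
open Finset

lemma card_filter_Ico_helper (n a b : ℕ) (hb : b ≤ n) :
    (Finset.univ.filter (fun i : Fin n => a ≤ i.val ∧ i.val < b)).card = b - a := by
  rw [← Nat.card_Ico a b]
  apply Finset.card_bij (fun i _ => i.val)
  · intro i hi
    simp only [mem_filter] at hi
    simp [Finset.mem_Ico, hi.2.1, hi.2.2]
  · intro i _ j _ h
    exact Fin.val_injective h
  · intro x hx
    simp only [Finset.mem_Ico] at hx
    exact ⟨⟨x, lt_of_lt_of_le hx.2 hb⟩, by simp [hx.1, hx.2], rfl⟩

/-- Combinatorial lemma from the minimax lower bound argument: on the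
structured label class (labels fixed to `u` on the `u`-th block `B_u` of size
`m/k`, fixed to `1` on `C₁`, fixed to `2` on `C₂`, and free in `{1,2}` on
`C₃`), the permutation-invariant mislabeling count reduces to the Hamming
distance on the free coordinates `C₃`. Labels `1,…,k` are encoded as
`Fin k` values `0,…,k−1`. -/
theorem structured_label_loss_reduces_to_hamming
    (k n m r : ℕ) (hk : 2 ≤ k) (hnm : n = m + 3 * r) (hdvd : k ∣ m)
    (z z' : Fin n → Fin k)
    (hblock : ∀ i : Fin n, i.val < m →
      (z i).val = i.val / (m / k) ∧ (z' i).val = i.val / (m / k))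
    (hC1 : ∀ i : Fin n, m ≤ i.val → i.val < m + r →
      (z i).val = 0 ∧ (z' i).val = 0)
    (hC2 : ∀ i : Fin n, m + r ≤ i.val → i.val < m + 2 * r →
      (z i).val = 1 ∧ (z' i).val = 1)
    (hC3 : ∀ i : Fin n, m + 2 * r ≤ i.val →
      ((z i).val = 0 ∨ (z i).val = 1) ∧ ((z' i).val = 0 ∨ (z' i).val = 1)) :
    (⨅ π : Fin k → Fin k,
        (Finset.univ.filter (fun i : Fin n => π (z i) ≠ z' i)).card)
      = (Finset.univ.filter (fun i : Fin n => m + 2 * r ≤ i.val ∧ z i ≠ z' i)).card := by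
  set e0 : Fin k := ⟨0, by omega⟩
  set e1 : Fin k := ⟨1, by omega⟩
  -- equality on the first m + 2r coordinates
  have heq : ∀ i : Fin n, i.val < m + 2 * r → z i = z' i := by
    intro i hi
    apply Fin.ext
    rcases lt_or_ge i.val m with h | h
    · obtain ⟨h1, h2⟩ := hblock i h; omega
    · rcases lt_or_ge i.val (m + r) with h' | h'
      · obtain ⟨h1, h2⟩ := hC1 i h h'; omega
      · obtain ⟨h1, h2⟩ := hC2 i h' hi; omega
  -- card bound for the RHS
  have hC3card : (Finset.univ.filter (fun i : Fin n => m + 2 * r ≤ i.val ∧ z i ≠ z' i)).card ≤ r := by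
    calc (Finset.univ.filter (fun i : Fin n => m + 2 * r ≤ i.val ∧ z i ≠ z' i)).card
        ≤ (Finset.univ.filter (fun i : Fin n => m + 2 * r ≤ i.val ∧ i.val < n)).card := by
          apply Finset.card_le_card
          intro i hi
          simp only [mem_filter] at hi ⊢
          exact ⟨hi.1, hi.2.1, i.isLt⟩
      _ = n - (m + 2 * r) := card_filter_Ico_helper n (m + 2 * r) n le_rfl
      _ ≤ r := by omega
  apply le_antisymm
  · -- upper bound: use identity
    refine (ciInf_le (OrderBot.bddBelow _) (fun x => x)).trans ?_
    apply le_of_eq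
    congr 1
    apply Finset.filter_congr
    intro i _
    simp only [ne_eq]
    constructor
    · intro h
      refine ⟨?_, h⟩
      by_contra hc
      exact h (heq i (by omega))
    · exact fun h => h.2
  · haveI : Nonempty (Fin k → Fin k) := ⟨fun x => x⟩
    apply le_ciInf
    intro π
    by_cases h0 : π e0 = e0
    · by_cases h1 : π e1 = e1
      · apply Finset.card_le_card
        intro i hi
        simp only [mem_filter] at hi ⊢
        refine ⟨Finset.mem_univ i, ?_⟩
        obtain ⟨_, hle, hne⟩ := hi
        obtain ⟨hz, _⟩ := hC3 i hle
        have : π (z i) = z i := by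
          rcases hz with h | h
          · have : z i = e0 := Fin.ext h
            rw [this, h0, ← this]
          · have : z i = e1 := Fin.ext h
            rw [this, h1, ← this]
        rw [this]; exact hne
      · -- C2 all mismatch
        refine hC3card.trans ?_
        have hsub : (Finset.univ.filter (fun i : Fin n => m + r ≤ i.val ∧ i.val < m + 2 * r))
            ⊆ (Finset.univ.filter (fun i : Fin n => π (z i) ≠ z' i)) := by
          intro i hi
          simp only [mem_filter] at hi ⊢
          obtain ⟨_, h1', h2'⟩ := hi
          obtain ⟨hz, hz'⟩ := hC2 i h1' h2'
          have hz1 : z i = e1 := Fin.ext hz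
          have hz'1 : z' i = e1 := Fin.ext hz'
          refine ⟨Finset.mem_univ i, ?_⟩
          rw [hz1, hz'1]; exact h1
        have := Finset.card_le_card hsub
        rw [card_filter_Ico_helper n (m + r) (m + 2 * r) (by omega)] at this
        omega
    · -- C1 all mismatch
      refine hC3card.trans ?_
      have hsub : (Finset.univ.filter (fun i : Fin n => m ≤ i.val ∧ i.val < m + r))
          ⊆ (Finset.univ.filter (fun i : Fin n => π (z i) ≠ z' i)) := by
        intro i hi
        simp only [mem_filter] at hi ⊢
        obtain ⟨_, h1', h2'⟩ := hi
        obtain ⟨hz, hz'⟩ := hC1 i h1' h2'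
        have hz1 : z i = e0 := Fin.ext hz
        have hz'1 : z' i = e0 := Fin.ext hz'
        refine ⟨Finset.mem_univ i, ?_⟩
        rw [hz1, hz'1]; exact h0
      have := Finset.card_le_card hsub
      rw [card_filter_Ico_helper n m (m + r) (by omega)] at this
      omega
end
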